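/- arXiv:math/0612112 — 6 statements merged into one kernel-verified Lean document; each statement's English description precedes it below -/
import Mathlib

section
/- The probability that no non-trivial loop of the Poisson loop ensemble L_α intersects a finite set F equals (∏_{x∈F} λ_x · det_{F×F}(G))^{-α}, i.e. exp(−α·μ({loops with p>0 hitting F})) = (∏_{x∈F} λ_x det(G|_{F×F}))^{-α}. In particular, μ(loops with p>0 hitting F) = log(∏_{x∈F} λ_x · det(G|_{F×F})). -/
open Matrix Finset

lemma sum_extend_aux {n m : Type*} [Fintype n] [Fintype m] [DecidableEq n]
    {f : m → n} (hf : Function.Injective f) (x : m → ℝ) (h : n → ℝ) :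
    ∑ k : n, h k * Function.extend f x 0 k = ∑ j : m, h (f j) * x j := by
  have h1 : ∑ k : n, h k * Function.extend f x 0 k
      = ∑ k ∈ Finset.univ.image f, h k * Function.extend f x 0 k := by
    refine (Finset.sum_subset (Finset.subset_univ _) fun k _ hk => ?_).symm
    have hne : ¬ ∃ a, f a = k := by
      rintro ⟨a, rfl⟩; exact hk (Finset.mem_image.2 ⟨a, Finset.mem_univ _, rfl⟩)
    rw [Function.extend_apply' _ _ _ hne]; simp
  rw [h1, Finset.sum_image (fun a _ b _ h => hf h)]
  exact Finset.sum_congr rfl fun j _ => by rw [hf.extend_apply]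

lemma posDef_submatrix_of_injective {n m : Type*} [Fintype n] [Fintype m]
    {M : Matrix n n ℝ} (hM : M.PosDef) {f : m → n} (hf : Function.Injective f) :
    (M.submatrix f f).PosDef := by
  classical
  refine Matrix.PosDef.of_dotProduct_mulVec_pos (hM.1.submatrix f) fun x hx => ?_
  set y : n → ℝ := Function.extend f x 0 with hy
  have hyf : ∀ j, y (f j) = x j := fun j => hf.extend_apply x 0 j
  have hy0 : y ≠ 0 := fun h => hx (funext fun j => show x j = (0 : m → ℝ) j by
    have := hyf j; rw [h] at this; simpa using this.symm)
  have hrow : ∀ i, (M.submatrix f f *ᵥ x) i = (M *ᵥ y) (f i) := by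
    intro i
    simp only [mulVec, dotProduct, submatrix_apply]
    exact (sum_extend_aux hf x (fun k => M (f i) k)).symm
  have key : star x ⬝ᵥ (M.submatrix f f) *ᵥ x = star y ⬝ᵥ M *ᵥ y := by
    simp only [dotProduct, star, Pi.star_apply, star_trivial, id]
    have := sum_extend_aux hf x (fun k => (M *ᵥ y) k)
    simp only [mul_comm] at this ⊢
    rw [hy, this]
    exact Finset.sum_congr rfl fun j _ => by rw [hrow]
  rw [key]; exact hM.dotProduct_mulVec_pos hy0

theorem loops_hitting_F {X : Type*} [Fintype X] [DecidableEq X]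
    (C : Matrix X X ℝ) (κ lam : X → ℝ)
    (hsymm : ∀ x y, C x y = C y x) (hC : ∀ x y, 0 ≤ C x y)
    (hdiag : ∀ x, C x x = 0) (hκ : ∀ x, 0 ≤ κ x)
    (hlam : ∀ x, lam x = κ x + ∑ y, C x y) (hpos : ∀ x, 0 < lam x)
    (hpd : (Matrix.diagonal lam - C).PosDef)
    (P G : Matrix X X ℝ)
    (hP : ∀ x y, P x y = C x y / lam x)
    (hG : G = (Matrix.diagonal lam - C)⁻¹) (F : Finset X) :
    -Real.log ((1 - P).det)
      + Real.log ((1 - P.submatrix (Subtype.val : {x // x ∈ Fᶜ} → X) Subtype.val).det)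
    = Real.log ((∏ x ∈ F, lam x) *
        (G.submatrix (Subtype.val : {x // x ∈ F} → X) Subtype.val).det) := by
  classical
  set M : Matrix X X ℝ := Matrix.diagonal lam - C with hM
  -- the equivalence F ⊕ Fᶜ ≃ X
  let e : {x // x ∈ F} ⊕ {x // x ∈ Fᶜ} ≃ X :=
    (Equiv.sumCongr (Equiv.refl {x // x ∈ F})
      (Equiv.subtypeEquivRight (fun x => Finset.mem_compl))).trans
      (Equiv.sumCompl (· ∈ F))
  have he1 : ∀ a : {x // x ∈ F}, e (Sum.inl a) = a.val := fun a => rfl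
  have he2 : ∀ a : {x // x ∈ Fᶜ}, e (Sum.inr a) = a.val := fun a => rfl
  set A : Matrix {x // x ∈ F} {x // x ∈ F} ℝ :=
    M.submatrix Subtype.val Subtype.val with hA
  set B : Matrix {x // x ∈ F} {x // x ∈ Fᶜ} ℝ :=
    M.submatrix Subtype.val Subtype.val with hB
  set Cm : Matrix {x // x ∈ Fᶜ} {x // x ∈ F} ℝ :=
    M.submatrix Subtype.val Subtype.val with hCm
  set D : Matrix {x // x ∈ Fᶜ} {x // x ∈ Fᶜ} ℝ :=
    M.submatrix Subtype.val Subtype.val with hD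
  have hblocks : M.submatrix e e = fromBlocks A B Cm D := by
    ext i j
    cases i <;> cases j <;> rfl
  -- positivity facts
  have hDpd : D.PosDef := posDef_submatrix_of_injective hpd Subtype.val_injective
  have hdetM : 0 < M.det := hpd.det_pos
  have hdetD : 0 < D.det := hDpd.det_pos
  haveI : Invertible D := hDpd.isUnit.invertible
  haveI hNinv : Invertible (M.submatrix e e) :=
    Matrix.invertibleOfIsUnitDet _ (by
      rw [Matrix.det_submatrix_equiv_self]; exact hdetM.ne'.isUnit)
  haveI hFBinv : Invertible (fromBlocks A B Cm D) := hblocks ▸ hNinv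
  haveI hSinv : Invertible (A - B * ⅟D * Cm) :=
    Matrix.invertibleOfFromBlocks₂₂Invertible A B Cm D
  set S : Matrix {x // x ∈ F} {x // x ∈ F} ℝ := A - B * ⅟D * Cm with hS
  have hdetMS : M.det = D.det * S.det := by
    rw [← Matrix.det_submatrix_equiv_self e, hblocks, Matrix.det_fromBlocks₂₂]
  have hdetS : 0 < S.det := by
    have := hdetMS
    nlinarith [hdetM, hdetD, this]
  -- inverse block identity
  have hNinvEq : (M.submatrix e e)⁻¹ = G.submatrix e e := by
    rw [Matrix.inv_submatrix_equiv, hG]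
  have hchain : G.submatrix e e =
      fromBlocks (⅟S) (-(⅟S * B * ⅟D)) (-(⅟D * Cm * ⅟S))
        (⅟D + ⅟D * Cm * ⅟S * B * ⅟D) := by
    rw [← hNinvEq, hblocks, ← Matrix.invOf_eq_nonsing_inv,
      Matrix.invOf_fromBlocks₂₂_eq]
  have hGF : G.submatrix (Subtype.val : {x // x ∈ F} → X) Subtype.val = ⅟S := by
    ext i j
    have h := congrFun (congrFun hchain (Sum.inl i)) (Sum.inl j)
    simpa [he1] using h
  have hdetGF : (G.submatrix (Subtype.val : {x // x ∈ F} → X) Subtype.val).det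
      = (S.det)⁻¹ := by
    rw [hGF, Matrix.invOf_eq_nonsing_inv, Matrix.det_nonsing_inv, Ring.inverse_eq_inv']
  -- entrywise factorization of 1 - P
  have h1P : ∀ x y, (1 - P) x y = (lam x)⁻¹ * M x y := by
    intro x y
    have hl := (hpos x).ne'
    simp only [Matrix.sub_apply, Matrix.one_apply, hP, hM, Matrix.diagonal_apply]
    by_cases h : x = y
    · subst h; simp only [if_pos rfl, if_true]; field_simp
    · simp only [if_neg h]; rw [div_eq_inv_mul]; ring
  have h1Pm : (1 - P) = Matrix.diagonal (fun x => (lam x)⁻¹) * M := by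
    ext x y; rw [Matrix.diagonal_mul]; exact h1P x y
  have hdet1P : (1 - P).det = (∏ x, (lam x)⁻¹) * M.det := by
    rw [h1Pm, Matrix.det_mul, Matrix.det_diagonal]
  have h1PD : (1 - P.submatrix (Subtype.val : {x // x ∈ Fᶜ} → X) Subtype.val)
      = Matrix.diagonal (fun i : {x // x ∈ Fᶜ} => (lam i.val)⁻¹) * D := by
    ext i j
    rw [Matrix.diagonal_mul]
    have h := h1P i.val j.val
    simp only [Matrix.sub_apply, Matrix.one_apply] at h ⊢
    rw [Matrix.submatrix_apply, show ((if i = j then (1:ℝ) else 0))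
      = (if (i.val : X) = j.val then 1 else 0) from by simp only [Subtype.ext_iff], h]
    rfl
  have hdet1PD : (1 - P.submatrix (Subtype.val : {x // x ∈ Fᶜ} → X) Subtype.val).det
      = (∏ i : {x // x ∈ Fᶜ}, (lam i.val)⁻¹) * D.det := by
    rw [h1PD, Matrix.det_mul, Matrix.det_diagonal]
  -- products
  have hpF : 0 < ∏ x ∈ F, lam x := Finset.prod_pos (fun x _ => hpos x)
  have hpD : 0 < ∏ x ∈ Fᶜ, lam x := Finset.prod_pos (fun x _ => hpos x)
  have hpX : 0 < ∏ x, lam x := Finset.prod_pos (fun x _ => hpos x)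
  have hprodX : (∏ x, lam x) = (∏ x ∈ F, lam x) * (∏ x ∈ Fᶜ, lam x) :=
    (Finset.prod_mul_prod_compl F lam).symm
  have hprodinv : (∏ x : X, (lam x)⁻¹) = (∏ x, lam x)⁻¹ := by
    rw [← Finset.prod_inv_distrib]
  have hprodDinv : (∏ i : {x // x ∈ Fᶜ}, (lam i.val)⁻¹) = (∏ x ∈ Fᶜ, lam x)⁻¹ := by
    rw [← Finset.prod_inv_distrib]
    exact Finset.prod_coe_sort Fᶜ fun x => (lam x)⁻¹
  -- log arithmetic
  rw [hdet1P, hdet1PD, hdetGF, hprodinv, hprodDinv]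
  have l1 : Real.log ((∏ x, lam x)⁻¹ * M.det)
      = -(Real.log (∏ x ∈ F, lam x) + Real.log (∏ x ∈ Fᶜ, lam x)) + Real.log M.det := by
    rw [Real.log_mul (by positivity) hdetM.ne', Real.log_inv, hprodX,
      Real.log_mul hpF.ne' hpD.ne']
  have l2 : Real.log ((∏ x ∈ Fᶜ, lam x)⁻¹ * D.det)
      = -Real.log (∏ x ∈ Fᶜ, lam x) + Real.log D.det := by
    rw [Real.log_mul (by positivity) hdetD.ne', Real.log_inv]
  have l3 : Real.log ((∏ x ∈ F, lam x) * (S.det)⁻¹)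
      = Real.log (∏ x ∈ F, lam x) - Real.log S.det := by
    rw [Real.log_mul hpF.ne' (by positivity), Real.log_inv]; ring
  have l4 : Real.log M.det = Real.log D.det + Real.log S.det := by
    rw [hdetMS, Real.log_mul hdetD.ne' hdetS.ne']
  rw [l1, l2, l3]
  linarith
end

section
/- For disjoint sets F₁, F₂ ⊆ X, the loop measure of loops visiting both F₁ and F₂ equals log( det(G) det(G^{D₁∩D₂}) / (det(G^{D₁}) det(G^{D₂})) ), where D_i = F_i^c; nonnegativity of this measure gives the determinant inequality det(G) det(G^{D₁∩D₂}) ≥ det(G^{D₁}) det(G^{D₂}). -/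
open Matrix Finset

section Lemmas
variable {n : Type*} [Fintype n] [DecidableEq n]
open scoped MatrixOrder

private lemma psd_det_nonneg {M : Matrix n n ℝ} (hM : M.PosSemidef) : 0 ≤ M.det := by
  rw [hM.1.det_eq_prod_eigenvalues]
  exact Finset.prod_nonneg fun i _ => hM.eigenvalues_nonneg i

private lemma psd_det_one_add {M : Matrix n n ℝ} (hM : M.PosSemidef) :
    (1 : ℝ) ≤ (1 + M).det := by
  set U : Matrix n n ℝ := (hM.1.eigenvectorUnitary : Matrix n n ℝ) with hUdef
  have hU1 : star U * U = 1 :=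
    Matrix.mem_unitaryGroup_iff'.mp hM.1.eigenvectorUnitary.2
  have hU2 : U * star U = 1 :=
    Matrix.mem_unitaryGroup_iff.mp hM.1.eigenvectorUnitary.2
  have hspec : M = U * diagonal (RCLike.ofReal ∘ hM.1.eigenvalues) * star U :=
    hM.1.spectral_theorem
  have h1 : (1 : Matrix n n ℝ) + M
      = U * (1 + diagonal (RCLike.ofReal ∘ hM.1.eigenvalues)) * star U := by
    rw [Matrix.mul_add, Matrix.add_mul, Matrix.mul_one, hU2, ← hspec]
  rw [h1, det_mul, det_mul]
  have h2 : det (star U) * det U = 1 := by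
    rw [← det_mul, hU1, det_one]
  have h3 : (1 : ℝ) ≤ det (1 + diagonal (RCLike.ofReal ∘ hM.1.eigenvalues)) := by
    rw [← Matrix.diagonal_one, Matrix.diagonal_add, det_diagonal]
    have h := Finset.prod_le_prod (s := Finset.univ)
      (f := fun _ : n => (1:ℝ))
      (g := fun i : n => (1 + (RCLike.ofReal ∘ hM.1.eigenvalues) i))
      (fun i _ => zero_le_one)
      (fun i _ => by
        have := hM.eigenvalues_nonneg i
        simp only [Function.comp_apply, RCLike.ofReal_real_eq_id, id_eq]
        linarith)
    simpa using h
  nlinarith [h2, h3, sq_nonneg (det U), sq_nonneg (det (star U))]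

private lemma psd_det_le_det_add {A B : Matrix n n ℝ} (hA : A.PosSemidef)
    (hB : B.PosSemidef) : A.det ≤ (A + B).det := by
  by_cases hdet : A.det = 0
  · rw [hdet]; exact psd_det_nonneg (hA.add hB)
  · set S := CFC.sqrt A with hSdef
    have hS : S.PosSemidef := (CFC.sqrt_nonneg A).posSemidef
    have hSS : S * S = A := CFC.sqrt_mul_sqrt_self A hA.nonneg
    have hdS : S.det ≠ 0 := by
      intro h
      rw [← hSS, det_mul, h, mul_zero] at hdet
      exact hdet rfl
    have hunit : IsUnit S.det := hdS.isUnit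
    have h1 : S * S⁻¹ = 1 := mul_nonsing_inv S hunit
    have h2 : S⁻¹ * S = 1 := nonsing_inv_mul S hunit
    set M := S⁻¹ * B * S⁻¹ with hMdef
    have hMpsd : M.PosSemidef := by
      have := hB.mul_mul_conjTranspose_same S⁻¹
      rwa [hS.1.inv.eq] at this
    have key : A + B = S * (1 + M) * S := by
      have hSMS : S * M * S = B := by
        rw [hMdef, ← Matrix.mul_assoc S, ← Matrix.mul_assoc S, h1, Matrix.one_mul,
          Matrix.mul_assoc, h2, Matrix.mul_one]
      rw [Matrix.mul_add, Matrix.mul_one, Matrix.add_mul, hSS, hSMS]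
    have hApos : 0 < A.det := lt_of_le_of_ne (psd_det_nonneg hA) (Ne.symm hdet)
    rw [key, det_mul, det_mul]
    have h3 := psd_det_one_add hMpsd
    have h4 : S.det * S.det = A.det := by rw [← det_mul, hSS]
    nlinarith
end Lemmas
section Lemmas2
variable {n : Type*} [Fintype n] [DecidableEq n]
open scoped MatrixOrder

private lemma posdef_submatrix_inj {m : Type*} [Fintype m] [DecidableEq m]
    {M : Matrix n n ℝ} (hM : M.PosDef) {f : m → n} (hf : Function.Injective f) :
    (M.submatrix f f).PosDef := by
  refine PosDef.of_dotProduct_mulVec_pos (hM.1.submatrix f) fun x hx => ?_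
  set y : n → ℝ := Function.extend f x (0 : n → ℝ) with hydef
  have hyf : ∀ i, y (f i) = x i := fun i => hf.extend_apply x (0 : n → ℝ) i
  have hy0 : ∀ z, z ∉ Set.range f → y z = 0 := by
    intro z hz
    exact Function.extend_apply' x (0 : n → ℝ) z (by simpa [Set.range] using hz)
  have hy : y ≠ 0 := by
    obtain ⟨i, hi⟩ := Function.ne_iff.mp hx
    exact Function.ne_iff.mpr ⟨f i, by simpa [hyf i] using hi⟩
  have hinner : ∀ z, (M *ᵥ y) z = ∑ j, M z (f j) * x j := by
    intro z
    have : ∑ w ∈ Finset.univ, M z w * y w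
        = ∑ w ∈ Finset.univ.image f, M z w * y w := by
      refine (Finset.sum_subset (Finset.subset_univ _) ?_).symm
      intro w _ hw
      rw [hy0 w (by simpa [Set.range] using hw), mul_zero]
    rw [mulVec, dotProduct, this, Finset.sum_image (fun a _ b _ h => hf h)]
    simp [hyf]
  have key : star x ⬝ᵥ (M.submatrix f f) *ᵥ x = star y ⬝ᵥ M *ᵥ y := by
    simp only [star_trivial, dotProduct]
    have : ∑ z ∈ Finset.univ, y z * (M *ᵥ y) z
        = ∑ z ∈ Finset.univ.image f, y z * (M *ᵥ y) z := by
      refine (Finset.sum_subset (Finset.subset_univ _) ?_).symm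
      intro w _ hw
      rw [hy0 w (by simpa [Set.range] using hw), zero_mul]
    rw [this, Finset.sum_image (fun a _ b _ h => hf h)]
    refine Finset.sum_congr rfl fun i _ => ?_
    rw [hyf, hinner]
    simp [mulVec, dotProduct, submatrix_apply]
  rw [key]
  exact hM.dotProduct_mulVec_pos hy

private lemma posdef_of_psd_det_ne_zero {M : Matrix n n ℝ} (hM : M.PosSemidef)
    (hdet : M.det ≠ 0) : M.PosDef := by
  refine PosDef.of_dotProduct_mulVec_pos hM.1 fun x hx => ?_
  set S := CFC.sqrt M with hSdef
  have hS : S.PosSemidef := (CFC.sqrt_nonneg M).posSemidef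
  have hSS : S * S = M := CFC.sqrt_mul_sqrt_self M hM.nonneg
  have hdS : S.det ≠ 0 := by
    intro h
    rw [← hSS, det_mul, h, mul_zero] at hdet
    exact hdet rfl
  have hSx : S *ᵥ x ≠ 0 := by
    intro h
    apply hx
    have : S⁻¹ *ᵥ (S *ᵥ x) = x := by
      rw [mulVec_mulVec, nonsing_inv_mul S hdS.isUnit, one_mulVec]
    rw [h, mulVec_zero] at this
    exact this.symm
  have hSt : Sᵀ = S := by
    have := hS.1
    rwa [IsHermitian, conjTranspose_eq_transpose_of_trivial] at this
  have key : star x ⬝ᵥ M *ᵥ x = (S *ᵥ x) ⬝ᵥ (S *ᵥ x) := by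
    rw [star_trivial, ← hSS, ← mulVec_mulVec, dotProduct_mulVec]
    congr 1
    rw [← mulVec_transpose, hSt]
  rw [key]
  have h1 : 0 ≤ (S *ᵥ x) ⬝ᵥ (S *ᵥ x) := Finset.sum_nonneg fun i _ => mul_self_nonneg _
  have h2 : (S *ᵥ x) ⬝ᵥ (S *ᵥ x) ≠ 0 := fun h => hSx (dotProduct_self_eq_zero.mp h)
  exact lt_of_le_of_ne h1 (Ne.symm h2)
end Lemmas2
section Fischer
variable {α β : Type*} [Fintype α] [DecidableEq α] [Fintype β] [DecidableEq β]

private lemma fischer (M : Matrix (α ⊕ β) (α ⊕ β) ℝ) (hM : M.PosDef) :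
    M.det ≤ (M.submatrix Sum.inl Sum.inl).det * (M.submatrix Sum.inr Sum.inr).det := by
  set A := M.submatrix Sum.inl Sum.inl with hAdef
  set B := M.submatrix Sum.inl Sum.inr with hBdef
  set D := M.submatrix Sum.inr Sum.inr with hDdef
  have hMeq : M = fromBlocks A B Bᴴ D := by
    ext i j
    cases i with
    | inl i => cases j with
      | inl j => rfl
      | inr j => rfl
    | inr i => cases j with
      | inl j =>
        have := congrFun (congrFun hM.1 (Sum.inr i)) (Sum.inl j)
        simp only [conjTranspose_apply, star_trivial] at this
        simp [fromBlocks, conjTranspose_apply, hBdef, ← this]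
      | inr j => rfl
  have hA : A.PosDef := posdef_submatrix_inj hM Sum.inl_injective
  haveI : Invertible A := A.invertibleOfIsUnitDet hA.det_pos.ne'.isUnit
  have hdet : M.det = A.det * (D - Bᴴ * A⁻¹ * B).det := by
    rw [hMeq, det_fromBlocks₁₁, invOf_eq_nonsing_inv]
  have hSchur : (D - Bᴴ * A⁻¹ * B).PosSemidef :=
    (PosDef.fromBlocks₁₁ B D hA).mp (hMeq ▸ hM.posSemidef)
  have hN : (Bᴴ * A⁻¹ * B).PosSemidef := by
    have := (hA.inv.posSemidef).mul_mul_conjTranspose_same Bᴴ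
    rwa [conjTranspose_conjTranspose] at this
  have hle : (D - Bᴴ * A⁻¹ * B).det ≤ D.det := by
    have := psd_det_le_det_add hSchur hN
    rwa [sub_add_cancel] at this
  rw [hdet]
  exact mul_le_mul_of_nonneg_left hle hA.det_pos.le
end Fischer
section Core
universe u
variable {α β γ : Type u} [Fintype α] [DecidableEq α] [Fintype β] [DecidableEq β]
  [Fintype γ] [DecidableEq γ]
set_option linter.unusedSectionVars false

private lemma inj_map_inl : Function.Injective (Sum.map Sum.inl id : α ⊕ γ → (α ⊕ β) ⊕ γ) :=
  Sum.map_injective.mpr ⟨Sum.inl_injective, Function.injective_id⟩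

private lemma inj_map_inr : Function.Injective (Sum.map Sum.inr id : β ⊕ γ → (α ⊕ β) ⊕ γ) :=
  Sum.map_injective.mpr ⟨Sum.inr_injective, Function.injective_id⟩

private lemma core (M : Matrix ((α ⊕ β) ⊕ γ) ((α ⊕ β) ⊕ γ) ℝ) (hM : M.PosDef) :
    M.det * (M.submatrix Sum.inr Sum.inr).det
      ≤ (M.submatrix (Sum.map Sum.inl id) (Sum.map Sum.inl id)).det *
        (M.submatrix (Sum.map Sum.inr id) (Sum.map Sum.inr id)).det := by
  set P := M.submatrix Sum.inl Sum.inl with hPdef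
  set Q := M.submatrix Sum.inl Sum.inr with hQdef
  set S := M.submatrix Sum.inr Sum.inr with hSdef
  have hsym : ∀ i j, M i j = M j i := by
    intro i j
    have := congrFun (congrFun hM.1 i) j
    exact (by simpa only [conjTranspose_apply, star_trivial] using this : M j i = M i j).symm
  have hMeq : M = fromBlocks P Q Qᴴ S := by
    ext i j
    cases i with
    | inl i => cases j with
      | inl j => rfl
      | inr j => rfl
    | inr i => cases j with
      | inl j => simp [fromBlocks, conjTranspose_apply, hQdef, hsym (Sum.inr i) (Sum.inl j)]
      | inr j => rfl
  have hS : S.PosDef := posdef_submatrix_inj hM Sum.inr_injective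
  haveI : Invertible S := S.invertibleOfIsUnitDet hS.det_pos.ne'.isUnit
  set B := P - Q * S⁻¹ * Qᴴ with hBdef
  have hdetM : M.det = S.det * B.det := by
    rw [hMeq, det_fromBlocks₂₂, invOf_eq_nonsing_inv]
  have hBpsd : B.PosSemidef :=
    (PosDef.fromBlocks₂₂ P Q hS).mp (hMeq ▸ hM.posSemidef)
  have hBdetne : B.det ≠ 0 := by
    intro h
    have := hM.det_pos
    rw [hdetM, h, mul_zero] at this
    exact lt_irrefl _ this
  have hB : B.PosDef := posdef_of_psd_det_ne_zero hBpsd hBdetne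
  -- the two side determinants
  have haux : ∀ (δ : Type u) [Fintype δ] [DecidableEq δ] (e : δ → α ⊕ β),
      Function.Injective e →
      (M.submatrix (Sum.map e id) (Sum.map e id)).det
        = S.det * (B.submatrix e e).det := by
    intro δ _ _ e he
    set N := M.submatrix (Sum.map e id) (Sum.map e id) with hNdef
    set P₁ := P.submatrix e e with hP1def
    set Q₁ := Q.submatrix e id with hQ1def
    have hNeq : N = fromBlocks P₁ Q₁ Q₁ᴴ S := by
      ext i j
      cases i with
      | inl i => cases j with
        | inl j => rfl
        | inr j => rfl
      | inr i => cases j with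
        | inl j =>
          simp only [hNdef, submatrix_apply, Sum.map, fromBlocks, of_apply, Sum.elim_inr,
            Sum.elim_inl, conjTranspose_apply, star_trivial, hQ1def, hQdef, id]
          exact hsym (Sum.inr i) (Sum.inl (e j))
        | inr j => rfl
    haveI : Invertible S := ‹Invertible S›
    have hdetN : N.det = S.det * (P₁ - Q₁ * S⁻¹ * Q₁ᴴ).det := by
      rw [hNeq, det_fromBlocks₂₂, invOf_eq_nonsing_inv]
    have hschur : P₁ - Q₁ * S⁻¹ * Q₁ᴴ = B.submatrix e e := by
      ext i j
      simp [hBdef, hP1def, hQ1def, Matrix.mul_apply]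
    rw [hdetN, hschur]
  have h1 := haux α Sum.inl Sum.inl_injective
  have h2 := haux β Sum.inr Sum.inr_injective
  have hfis := fischer B hB
  have hSpos := hS.det_pos
  rw [hdetM, h1, h2]
  nlinarith [mul_le_mul_of_nonneg_left hfis (mul_pos hSpos hSpos).le, hSpos, hB.det_pos]
end Core
section Glue

private lemma det_submatrix_congr {X ι κ : Type*} [Fintype X] [DecidableEq X]
    [Fintype ι] [DecidableEq ι] [Fintype κ] [DecidableEq κ]
    (A : Matrix X X ℝ) {f : ι → X} {g : κ → X}
    (hf : Function.Injective f) (hg : Function.Injective g)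
    (h : Set.range f = Set.range g) :
    (A.submatrix f f).det = (A.submatrix g g).det := by
  set e : ι ≃ κ := (Equiv.ofInjective f hf).trans
    ((Equiv.setCongr h).trans (Equiv.ofInjective g hg).symm) with hedef
  have hge : ∀ i, g (e i) = f i := by
    intro i
    have h1 : g ((Equiv.ofInjective g hg).symm
        ((Equiv.setCongr h) (Equiv.ofInjective f hf i)))
        = ((Equiv.setCongr h) (Equiv.ofInjective f hf i) : X) :=
      Equiv.apply_ofInjective_symm hg _
    simpa [hedef] using h1
  have hsub : (A.submatrix g g).submatrix e e = A.submatrix f f := by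
    ext i j
    simp [hge]
  rw [← hsub, Matrix.det_submatrix_equiv_self]

end Glue

theorem det_product_inequality {X : Type*} [Fintype X] [DecidableEq X]
    (C : Matrix X X ℝ) (lam : X → ℝ)
    (hsymm : ∀ x y, C x y = C y x)
    (hpd : (Matrix.diagonal lam - C).PosDef)
    (F₁ F₂ : Finset X) (hdisj : Disjoint F₁ F₂) :
    (((Matrix.diagonal lam - C).submatrix
        (Subtype.val : {x // x ∈ F₁ᶜ} → X) Subtype.val)⁻¹).det *
    (((Matrix.diagonal lam - C).submatrix
        (Subtype.val : {x // x ∈ F₂ᶜ} → X) Subtype.val)⁻¹).det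
    ≤ ((Matrix.diagonal lam - C)⁻¹).det *
      (((Matrix.diagonal lam - C).submatrix
        (Subtype.val : {x // x ∈ F₁ᶜ ∩ F₂ᶜ} → X) Subtype.val)⁻¹).det := by
  classical
  set A : Matrix X X ℝ := Matrix.diagonal lam - C with hAdef
  set α := {x // x ∈ F₁}
  set β := {x // x ∈ F₂}
  set γ := {x // x ∈ F₁ᶜ ∩ F₂ᶜ}
  set g : (α ⊕ β) ⊕ γ → X :=
    Sum.elim (Sum.elim Subtype.val Subtype.val) Subtype.val with hgdef
  have hmemγ : ∀ c : γ, c.1 ∉ F₁ ∧ c.1 ∉ F₂ := by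
    intro c
    have := c.2
    simp only [Finset.mem_inter, Finset.mem_compl] at this
    exact this
  have hginj : Function.Injective g := by
    rintro ((a | a) | a) ((b | b) | b) h <;>
      simp only [hgdef, Sum.elim_inl, Sum.elim_inr] at h
    · rw [Subtype.ext h]
    · exact absurd (show (a : X) ∈ F₂ by rw [h]; exact b.2)
        (Finset.disjoint_left.mp hdisj a.2)
    · exact absurd (show (b : X) ∈ F₁ by rw [← h]; exact a.2) (hmemγ b).1
    · exact absurd (show (b : X) ∈ F₂ by rw [← h]; exact a.2)
        (Finset.disjoint_left.mp hdisj b.2)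
    · rw [Subtype.ext h]
    · exact absurd (show (b : X) ∈ F₂ by rw [← h]; exact a.2) (hmemγ b).2
    · exact absurd (show (a : X) ∈ F₁ by rw [h]; exact b.2) (hmemγ a).1
    · exact absurd (show (a : X) ∈ F₂ by rw [h]; exact b.2) (hmemγ a).2
    · rw [Subtype.ext h]
  have hgsurj : Function.Surjective g := by
    intro x
    by_cases h1 : x ∈ F₁
    · exact ⟨Sum.inl (Sum.inl ⟨x, h1⟩), rfl⟩
    by_cases h2 : x ∈ F₂
    · exact ⟨Sum.inl (Sum.inr ⟨x, h2⟩), rfl⟩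
    · exact ⟨Sum.inr ⟨x, by simp [Finset.mem_inter, Finset.mem_compl, h1, h2]⟩, rfl⟩
  set M : Matrix ((α ⊕ β) ⊕ γ) ((α ⊕ β) ⊕ γ) ℝ := A.submatrix g g with hMdef
  have hMpd : M.PosDef := posdef_submatrix_inj hpd hginj
  have hcore := core M hMpd
  have hdM : M.det = A.det := by
    have h0 : M = A.submatrix (Equiv.ofBijective g ⟨hginj, hgsurj⟩)
        (Equiv.ofBijective g ⟨hginj, hgsurj⟩) := rfl
    rw [h0, Matrix.det_submatrix_equiv_self]
  have hdγ : M.submatrix Sum.inr Sum.inr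
      = A.submatrix (Subtype.val : γ → X) Subtype.val := rfl
  -- block α ⊕ γ  ↔  F₂ᶜ
  have hblock1 : M.submatrix (Sum.map Sum.inl id) (Sum.map Sum.inl id)
      = A.submatrix (Sum.elim Subtype.val Subtype.val : α ⊕ γ → X)
          (Sum.elim Subtype.val Subtype.val) := by
    ext i j
    cases i <;> cases j <;> rfl
  have hcomp1 : (Sum.elim Subtype.val Subtype.val : α ⊕ γ → X)
      = g ∘ Sum.map Sum.inl id := by
    funext i; cases i <;> rfl
  have hinj1 : Function.Injective (Sum.elim Subtype.val Subtype.val : α ⊕ γ → X) := by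
    rw [hcomp1]; exact hginj.comp inj_map_inl
  have hrange1 : Set.range (Sum.elim Subtype.val Subtype.val : α ⊕ γ → X)
      = Set.range (Subtype.val : {x // x ∈ F₂ᶜ} → X) := by
    rw [Set.Sum.elim_range, Subtype.range_coe, Subtype.range_coe, Subtype.range_coe]
    ext x
    constructor
    · rintro (h | h)
      · exact Finset.mem_compl.mpr (Finset.disjoint_left.mp hdisj h)
      · exact (Finset.mem_inter.mp h).2
    · intro h
      by_cases h1 : x ∈ F₁
      · exact Or.inl h1
      · exact Or.inr (Finset.mem_inter.mpr
          ⟨Finset.mem_compl.mpr h1, h⟩)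
  have hd2 : (M.submatrix (Sum.map Sum.inl id) (Sum.map Sum.inl id)).det
      = (A.submatrix (Subtype.val : {x // x ∈ F₂ᶜ} → X) Subtype.val).det := by
    rw [hblock1]
    exact det_submatrix_congr A hinj1 Subtype.val_injective hrange1
  -- block β ⊕ γ  ↔  F₁ᶜ
  have hblock2 : M.submatrix (Sum.map Sum.inr id) (Sum.map Sum.inr id)
      = A.submatrix (Sum.elim Subtype.val Subtype.val : β ⊕ γ → X)
          (Sum.elim Subtype.val Subtype.val) := by
    ext i j
    cases i <;> cases j <;> rfl
  have hcomp2 : (Sum.elim Subtype.val Subtype.val : β ⊕ γ → X)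
      = g ∘ Sum.map Sum.inr id := by
    funext i; cases i <;> rfl
  have hinj2 : Function.Injective (Sum.elim Subtype.val Subtype.val : β ⊕ γ → X) := by
    rw [hcomp2]; exact hginj.comp inj_map_inr
  have hrange2 : Set.range (Sum.elim Subtype.val Subtype.val : β ⊕ γ → X)
      = Set.range (Subtype.val : {x // x ∈ F₁ᶜ} → X) := by
    rw [Set.Sum.elim_range, Subtype.range_coe, Subtype.range_coe, Subtype.range_coe]
    ext x
    constructor
    · rintro (h | h)
      · exact Finset.mem_compl.mpr (Finset.disjoint_right.mp hdisj h)
      · exact (Finset.mem_inter.mp h).1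
    · intro h
      by_cases h2 : x ∈ F₂
      · exact Or.inl h2
      · exact Or.inr (Finset.mem_inter.mpr
          ⟨h, Finset.mem_compl.mpr h2⟩)
  have hd1 : (M.submatrix (Sum.map Sum.inr id) (Sum.map Sum.inr id)).det
      = (A.submatrix (Subtype.val : {x // x ∈ F₁ᶜ} → X) Subtype.val).det := by
    rw [hblock2]
    exact det_submatrix_congr A hinj2 Subtype.val_injective hrange2
  rw [hdM, hdγ, hd1, hd2] at hcore
  -- positivity of the determinants
  have hpdA : 0 < A.det := hpd.det_pos
  have hpd1 : 0 < (A.submatrix (Subtype.val : {x // x ∈ F₁ᶜ} → X) Subtype.val).det :=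
    (posdef_submatrix_inj hpd Subtype.val_injective).det_pos
  have hpd2 : 0 < (A.submatrix (Subtype.val : {x // x ∈ F₂ᶜ} → X) Subtype.val).det :=
    (posdef_submatrix_inj hpd Subtype.val_injective).det_pos
  have hpdγ : 0 < (A.submatrix (Subtype.val : γ → X) Subtype.val).det :=
    (posdef_submatrix_inj hpd Subtype.val_injective).det_pos
  rw [Matrix.det_nonsing_inv, Matrix.det_nonsing_inv, Matrix.det_nonsing_inv,
    Matrix.det_nonsing_inv]
  simp only [Ring.inverse_eq_inv']
  rw [← mul_inv, ← mul_inv]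
  apply inv_anti₀
  · positivity
  · nlinarith
end

section
/- The spanning tree probability P_ST(Υ) = Z_e ∏_{ξ∈Υ} C_ξ defines a probability measure: Σ_{Υ ∈ ST_{X,Δ}} ∏_{(x,y)∈Υ} C_{x,y} ∏_{x : (x,Δ)∈Υ} κ_x = det(M_λ − C), i.e. the weighted matrix-tree theorem for trees rooted at the cemetery point Δ. -/
/-!
Each row of `diagonal lam - C` is a weighted sum of "edge rows" `e_x - e_y` (weight `C x y`) and
`e_x` (weight `κ x`), so multilinearity of the determinant in the rows expands
`det (diagonal lam - C)` over all parent maps `f : X → Option X`, the term of `f` being its weight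
times the determinant of `I - P_f`, with `P_f` the adjacency matrix of `f`. That determinant is `1`
when `f` is a tree rooted at `Δ`: a non-identity permutation contributing to it would have to move
every point it does not fix to that point's parent, yielding a parent chain that never reaches `Δ`.
It is `0` otherwise: the indicator of the vertices that never reach `Δ` is then a nonzero vector in
the kernel of `I - P_f`.
-/

open Matrix Finset

/-- A spanning arborescence of `X ∪ {Δ}` rooted at the cemetery `Δ`, encoded
by the parent map `f : X → Option X` (`none` is `Δ`): from every vertex the
parent chain reaches the root, so there are no cycles. -/
def IsSpanningArbo {X : Type*} (f : X → Option X) : Prop :=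
  ∀ x : X, ∃ k : ℕ, (fun o : Option X => o.bind f)^[k] (some x) = none

namespace Matrix

variable {n R : Type*} [Fintype n] [DecidableEq n] [CommRing R]

theorem det_mul_eq_zero_of_mulVec_eq_zero {M : Matrix n n R} {v : n → R} (hv : M *ᵥ v = 0)
    (i : n) : M.det * v i = 0 := by
  have h := congrArg (· i) (mulVec_mulVec v M.adjugate M)
  simpa [hv, adjugate_mul, smul_mulVec] using h.symm

theorem det_of_sum_smul {ι : Type*} [Fintype ι] (c : n → ι → R) (v : n → ι → n → R) :
    (of fun i => ∑ j, c i j • v i j).det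
      = ∑ f : n → ι, (∏ i, c i (f i)) * (of fun i => v i (f i)).det := by
  have h := (detRowAlternating (R := R) (n := n)).toMultilinearMap.map_sum
    (fun i j => c i j • v i j)
  simp only [AlternatingMap.coe_multilinearMap, MultilinearMap.map_smul_univ] at h
  exact h

end Matrix

section ParentMap

variable {X : Type*}

def ReachesRoot (f : X → Option X) (x : X) : Prop :=
  ∃ k : ℕ, (fun o : Option X => o.bind f)^[k] (some x) = none

theorem reachesRoot_iff {f : X → Option X} {x : X} :
    ReachesRoot f x ↔ ∀ y, f x = some y → ReachesRoot f y := by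
  constructor
  · rintro ⟨_ | k, hk⟩ y hy
    · simp at hk
    · exact ⟨k, by simpa [Function.iterate_succ_apply, hy] using hk⟩
  · intro h
    cases hx : f x with
    | none => exact ⟨1, by simp [hx]⟩
    | some y =>
      obtain ⟨k, hk⟩ := h y hx
      exact ⟨k + 1, by simpa [Function.iterate_succ_apply, hx] using hk⟩

theorem not_reachesRoot_of_forall_mem {f : X → Option X} {S : Set X}
    (hS : ∀ x ∈ S, ∃ y ∈ S, f x = some y) {x : X} (hx : x ∈ S) : ¬ ReachesRoot f x := by
  rintro ⟨k, hk⟩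
  induction k generalizing x with
  | zero => simp at hk
  | succ k ih =>
    obtain ⟨y, hy, hxy⟩ := hS x hx
    exact ih hy (by simpa [Function.iterate_succ_apply, hxy] using hk)

variable {R : Type*} [CommRing R] [DecidableEq X]

/-- The row `e_x - e_o` of the edge from `x` to its parent `o`, with `e_Δ = 0`. -/
def parentRow (x : X) (o : Option X) (y : X) : R :=
  (if x = y then 1 else 0) - (if o = some y then 1 else 0)

theorem diagonal_sub_eq_sum_smul_parentRow [Fintype X] (C : Matrix X X R) (κ lam : X → R)
    (hlam : ∀ x, lam x = κ x + ∑ y, C x y) :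
    diagonal lam - C = of fun x => ∑ o : Option X, o.elim (κ x) (C x) • parentRow x o := by
  ext x y
  have hedges : ∑ z, C x z * parentRow x (some z) y
      = (∑ z, C x z) * (if x = y then 1 else 0) - C x y := by
    simp [parentRow, mul_sub]
  simp only [Matrix.sub_apply, diagonal_apply, of_apply, Fintype.sum_option, Option.elim,
    Finset.sum_apply, Pi.add_apply, Pi.smul_apply, smul_eq_mul, hedges]
  simp only [parentRow, hlam, reduceCtorEq, if_false, sub_zero]
  split_ifs <;> ring

variable [Fintype X]

theorem det_parentRow_of_isSpanningArbo {f : X → Option X} (hf : IsSpanningArbo f) :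
    (of fun x => parentRow (R := R) x (f x)).det = 1 := by
  rw [det_apply, Finset.sum_eq_single (1 : Equiv.Perm X)]
  · have hloop (x : X) : f x ≠ some x := fun h =>
      not_reachesRoot_of_forall_mem (S := {x}) (by simpa using h) rfl (hf x)
    simp [parentRow, hloop]
  · intro σ _ hσ
    suffices ∃ x, parentRow (R := R) (σ x) (f (σ x)) x = 0 by
      obtain ⟨x, hx⟩ := this
      rw [prod_eq_zero (mem_univ x) (by simpa using hx), smul_zero]
    by_contra! hne
    have hmoved : ∀ x ∈ {x | σ x ≠ x}, ∃ y ∈ {x | σ x ≠ x}, f x = some y := by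
      intro x hx
      obtain ⟨y, rfl⟩ := σ.surjective x
      have hy : σ y ≠ y := fun h => hx (congrArg σ h)
      refine ⟨y, hy, ?_⟩
      by_contra hpar
      simpa [parentRow, hy, hpar] using hne y
    obtain ⟨x₀, hx₀⟩ : ∃ x, σ x ≠ x := by
      by_contra! h
      exact hσ (Equiv.ext h)
    exact not_reachesRoot_of_forall_mem hmoved hx₀ (hf x₀)
  · simp

theorem det_parentRow_of_not_isSpanningArbo {f : X → Option X} (hf : ¬ IsSpanningArbo f) :
    (of fun x => parentRow (R := R) x (f x)).det = 0 := by
  classical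
  obtain ⟨x₀, hx₀⟩ := not_forall.mp hf
  let v : X → R := fun x => if ReachesRoot f x then 0 else 1
  have hv : (of fun x => parentRow (R := R) x (f x)) *ᵥ v = 0 := by
    funext x
    simp only [mulVec, dotProduct, of_apply, parentRow, sub_mul, sum_sub_distrib, ite_mul,
      one_mul, zero_mul, sum_ite_eq, mem_univ, if_true, Pi.zero_apply]
    cases hx : f x <;> simp [v, reachesRoot_iff (x := x), hx]
  simpa [v, ReachesRoot, hx₀] using det_mul_eq_zero_of_mulVec_eq_zero hv x₀

end ParentMap

open Classical in
theorem matrix_tree_rooted_general {X : Type*} [Fintype X] [DecidableEq X]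
    (C : Matrix X X ℝ) (κ lam : X → ℝ)
    (hlam : ∀ x, lam x = κ x + ∑ y, C x y) :
    ∑ f : X → Option X,
        (if IsSpanningArbo f then ∏ x, (f x).elim (κ x) (fun y => C x y) else 0)
      = (Matrix.diagonal lam - C).det := by
  rw [diagonal_sub_eq_sum_smul_parentRow C κ lam hlam, det_of_sum_smul]
  refine sum_congr rfl fun f _ => ?_
  by_cases hf : IsSpanningArbo f
  · rw [if_pos hf, det_parentRow_of_isSpanningArbo hf, mul_one]
  · rw [if_neg hf, det_parentRow_of_not_isSpanningArbo hf, mul_zero]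

open Classical in
/-- Weighted matrix-tree theorem for trees rooted at the cemetery point. -/
theorem matrix_tree_rooted {X : Type*} [Fintype X] [DecidableEq X]
    (C : Matrix X X ℝ) (κ lam : X → ℝ)
    (hsymm : ∀ x y, C x y = C y x) (hC : ∀ x y, 0 ≤ C x y)
    (hdiag : ∀ x, C x x = 0) (hκ : ∀ x, 0 ≤ κ x)
    (hlam : ∀ x, lam x = κ x + ∑ y, C x y)
    (hpd : (Matrix.diagonal lam - C).PosDef) :
    ∑ f : X → Option X,
        (if IsSpanningArbo f then ∏ x, (f x).elim (κ x) (fun y => C x y) else 0)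
      = (Matrix.diagonal lam - C).det :=
  matrix_tree_rooted_general C κ lam hlam
end

section
/- Kirchhoff's theorem via the transfer matrix: the probability that the unoriented edge {x,y} belongs to the random spanning tree equals C_{x,y}(G^{x,x} + G^{y,y} − 2G^{x,y}), i.e. P_ST(±(x,y) ∈ Υ) = C_{x,y} K^{(x,y),(x,y)}. -/
open Matrix Finset

section Helpers
variable {X : Type*} [Fintype X] [DecidableEq X]

/-- The vector `e_u - e_{f u}` (or `e_u` if `f u = Δ`). -/
def aRow (u : X) (o : Option X) : X → ℝ :=
  Pi.single u 1 - o.elim 0 (fun w => Pi.single w 1)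

lemma iterate_bind_none (f : X → Option X) (k : ℕ) :
    (fun o : Option X => o.bind f)^[k] none = none :=
  Function.iterate_fixed rfl k

lemma det_one_sub_of_isNilpotent {P : Matrix X X ℝ} (h : IsNilpotent P) :
    (1 - P).det = 1 := by
  have hu := Matrix.isUnit_charpolyRev_of_isNilpotent h
  rw [Polynomial.isUnit_iff] at hu
  obtain ⟨r, -, hrp⟩ := hu
  have h0 : Polynomial.eval 0 P.charpolyRev = 1 := Matrix.eval_charpolyRev
  rw [← hrp, Polynomial.eval_C] at h0
  have hcp : P.charpolyRev = 1 := by rw [← hrp, h0, Polynomial.C_1]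
  have := congrArg (Polynomial.eval 1) hcp
  rw [Matrix.charpolyRev, ← Polynomial.coe_evalRingHom, RingHom.map_det] at this
  have hmap : (Polynomial.evalRingHom 1).mapMatrix
      (1 - (Polynomial.X : Polynomial ℝ) • P.map Polynomial.C) = 1 - P := by
    ext i j
    rcases eq_or_ne i j with rfl | hij
    · simp [Matrix.one_apply]
    · simp [Matrix.one_apply, hij]
  rw [hmap] at this
  simpa using this

/-- The 0/1 parent matrix of `f`. -/
def pMat (f : X → Option X) : Matrix X X ℝ :=
  Matrix.of fun u v => if f u = some v then 1 else 0

lemma pMat_pow_apply (f : X → Option X) (k : ℕ) (u v : X) :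
    (pMat f ^ k) u v
      = if (fun o : Option X => o.bind f)^[k] (some u) = some v then 1 else 0 := by
  induction k generalizing v with
  | zero =>
    simp [Matrix.one_apply, eq_comm]
  | succ k ih =>
    rw [pow_succ, Matrix.mul_apply]
    rw [Function.iterate_succ_apply']
    rcases h : (fun o : Option X => o.bind f)^[k] (some u) with _ | w₀
    · simp only [h, Option.bind_none]
      rw [Finset.sum_eq_zero]
      · simp
      · intro w _
        rw [ih w, h]
        simp
    · simp only [h, Option.bind_some]
      rw [Finset.sum_eq_single w₀]
      · rw [ih w₀, h]
        simp [pMat]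
      · intro w _ hw
        rw [ih w, h]
        simp [hw, Ne.symm hw]
      · simp


lemma sum_Ico_telescope {M : Type*} [AddCommGroup M] (g : ℕ → M) {i j : ℕ} (h : i ≤ j) :
    ∑ k ∈ Finset.Ico i j, (g k - g (k + 1)) = g i - g j := by
  induction j, h using Nat.le_induction with
  | base => simp
  | succ j hij ih =>
    rw [Finset.sum_Ico_succ_top (by omega), ih]
    abel

open Classical in
lemma det_arrowMatrix (f : X → Option X) :
    (Matrix.of fun u => aRow u (f u)).det = if IsSpanningArbo f then 1 else 0 := by
  have hA : (Matrix.of fun u => aRow u (f u)) = 1 - pMat f := by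
    ext u v
    rcases h : f u with _ | w
    · rcases eq_or_ne v u with rfl | hvu
      · simp [aRow, Matrix.one_apply, pMat, h, Pi.single_apply]
      · simp [aRow, Matrix.one_apply, pMat, h, hvu, Ne.symm hvu, Pi.single_apply]
    · rcases eq_or_ne v u with rfl | hvu
      · simp [aRow, Matrix.one_apply, pMat, h, Pi.single_apply, eq_comm]
      · simp [aRow, Matrix.one_apply, pMat, h, hvu, Ne.symm hvu, Pi.single_apply, eq_comm]
  by_cases harb : IsSpanningArbo f
  · rw [if_pos harb, hA]
    apply det_one_sub_of_isNilpotent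
    set N : ℕ := Finset.univ.sup (fun u : X => Nat.find (harb u)) with hN
    refine ⟨N, ?_⟩
    ext u v
    rw [pMat_pow_apply]
    have hk : Nat.find (harb u) ≤ N :=
      Finset.le_sup (f := fun u : X => Nat.find (harb u)) (Finset.mem_univ u)
    have hnone : (fun o : Option X => o.bind f)^[N] (some u) = none := by
      have h1 : (fun o : Option X => o.bind f)^[Nat.find (harb u)] (some u) = none :=
        Nat.find_spec (harb u)
      calc (fun o : Option X => o.bind f)^[N] (some u)
          = (fun o : Option X => o.bind f)^[N - Nat.find (harb u)]
              ((fun o : Option X => o.bind f)^[Nat.find (harb u)] (some u)) := by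
            rw [← Function.iterate_add_apply]
            congr 1
            omega
        _ = none := by rw [h1, iterate_bind_none]
    simp [hnone]
  · rw [if_neg harb]
    simp only [IsSpanningArbo, not_forall] at harb
    obtain ⟨x₀, hx₀⟩ := harb
    push_neg at hx₀
    have hsome : ∀ k, ((fun o : Option X => o.bind f)^[k] (some x₀)).isSome := fun k =>
      Option.ne_none_iff_isSome.mp (hx₀ k)
    set a : ℕ → X := fun k => ((fun o : Option X => o.bind f)^[k] (some x₀)).get (hsome k)
      with ha_def
    have ha : ∀ k, (fun o : Option X => o.bind f)^[k] (some x₀) = some (a k) := fun k =>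
      (Option.some_get (hsome k)).symm
    have hstep : ∀ k, f (a k) = some (a (k + 1)) := by
      intro k
      have := ha (k + 1)
      rw [Function.iterate_succ_apply', ha k, Option.bind_some] at this
      exact this
    obtain ⟨i0, j0, hne, heq⟩ := Finite.exists_ne_map_eq_of_infinite a
    wlog hij : i0 < j0 generalizing i0 j0
    · exact this j0 i0 hne.symm heq.symm (by omega)
    set v : X → ℝ := fun u => ∑ k ∈ Finset.Ico i0 j0, if a k = u then 1 else 0 with hv
    have hvne : v ≠ 0 := by
      intro h0
      have h1 : v (a i0) = 0 := by rw [h0]; rfl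
      rw [hv] at h1
      have h2 : (1 : ℝ) ≤ ∑ k ∈ Finset.Ico i0 j0, if a k = a i0 then (1 : ℝ) else 0 := by
        have := Finset.single_le_sum
          (f := fun k => if a k = a i0 then (1 : ℝ) else 0)
          (fun k _ => by positivity)
          (Finset.mem_Ico.mpr ⟨le_refl i0, hij⟩)
        simpa using this
      simp only [h1] at h2
      linarith
    have hker : Matrix.vecMul v (Matrix.of fun u => aRow u (f u)) = 0 := by
      funext t
      have h1 : Matrix.vecMul v (Matrix.of fun u => aRow u (f u)) t
          = ∑ u, v u * aRow u (f u) t := by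
        simp [Matrix.vecMul, dotProduct]
      rw [h1]
      simp only [hv, Finset.sum_mul]
      rw [Finset.sum_comm]
      have h2 : ∀ k : ℕ, (∑ u, (if a k = u then (1:ℝ) else 0) * aRow u (f u) t)
          = (Pi.single (a k) 1 : X → ℝ) t - (Pi.single (a (k+1)) 1 : X → ℝ) t := by
        intro k
        rw [Finset.sum_eq_single (a k)]
        · rw [if_pos rfl, one_mul, aRow, hstep k]
          simp
        · intro u _ hu
          rw [if_neg (Ne.symm hu), zero_mul]
        · intro h
          exact absurd (Finset.mem_univ _) h
      rw [Finset.sum_congr rfl (fun k _ => h2 k),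
        sum_Ico_telescope (fun n => (Pi.single (a n) 1 : X → ℝ) t) hij.le, heq]
      simp
    by_contra hdet
    exact hvne (Matrix.eq_zero_of_vecMul_eq_zero hdet hker)

open Classical in
lemma det_expand (C : Matrix X X ℝ) (κ : X → ℝ) (s : X → Finset (Option X)) :
    (Matrix.of fun u => ∑ o ∈ s u, (o.elim (κ u) (fun v => C u v)) • aRow u o).det
      = ∑ f ∈ Fintype.piFinset s,
          (if IsSpanningArbo f then ∏ u, (f u).elim (κ u) (fun v => C u v) else 0) := by
  have h1 : (Matrix.of fun u => ∑ o ∈ s u, (o.elim (κ u) (fun v => C u v)) • aRow u o).det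
      = (Matrix.detRowAlternating (R := ℝ) (n := X)).toMultilinearMap
          (fun u => ∑ o ∈ s u, (o.elim (κ u) (fun v => C u v)) • aRow u o) := rfl
  rw [h1, (Matrix.detRowAlternating (R := ℝ) (n := X)).toMultilinearMap.map_sum_finset
    (fun u o => (o.elim (κ u) (fun v => C u v)) • aRow u o) s]
  refine Finset.sum_congr rfl fun f _ => ?_
  have h2 : (Matrix.detRowAlternating (R := ℝ) (n := X)).toMultilinearMap
        (fun u => ((f u).elim (κ u) (fun v => C u v)) • aRow u (f u))
      = (∏ u, (f u).elim (κ u) (fun v => C u v)) •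
          (Matrix.detRowAlternating (R := ℝ) (n := X)).toMultilinearMap
            (fun u => aRow u (f u)) :=
    MultilinearMap.map_smul_univ _ _ _
  rw [h2]
  have h3 : (Matrix.detRowAlternating (R := ℝ) (n := X)).toMultilinearMap
        (fun u => aRow u (f u))
      = (Matrix.of fun u => aRow u (f u)).det := rfl
  rw [h3, det_arrowMatrix, smul_eq_mul]
  by_cases h : IsSpanningArbo f <;> simp [h]

lemma no_two_cycle {f : X → Option X} (harb : IsSpanningArbo f) {x y : X}
    (hx : f x = some y) (hy : f y = some x) : False := by
  have key : ∀ k, (fun o : Option X => o.bind f)^[k] (some x) = some x ∨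
      (fun o : Option X => o.bind f)^[k] (some x) = some y := by
    intro k
    induction k with
    | zero => left; rfl
    | succ k ih =>
      rw [Function.iterate_succ_apply']
      rcases ih with h | h <;> rw [h]
      · right; simpa using hx
      · left; simpa using hy
  obtain ⟨k, hk⟩ := harb x
  rcases key k with h | h <;> rw [hk] at h <;> exact Option.some_ne_none _ h.symm

lemma row_sum (C : Matrix X X ℝ) (κ lam : X → ℝ) (hdiag : ∀ x, C x x = 0)
    (hlam : ∀ x, lam x = κ x + ∑ y, C x y) (u : X) :
    (Matrix.diagonal lam - C) u
      = ∑ o : Option X, (o.elim (κ u) (fun v => C u v)) • aRow u o := by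
  funext t
  have hs : (∑ o : Option X, (o.elim (κ u) (fun v => C u v)) • aRow u o) t
      = ∑ o : Option X, (o.elim (κ u) (fun v => C u v)) * aRow u o t := by
    rw [Finset.sum_apply]; rfl
  rw [hs, Fintype.sum_option]
  rcases eq_or_ne t u with rfl | htu
  · simp only [Matrix.sub_apply, Matrix.diagonal_apply_eq, hdiag t, sub_zero, hlam t]
    simp [aRow, Pi.single_apply, mul_sub, Finset.sum_sub_distrib, mul_ite, mul_one, mul_zero,
      Finset.sum_ite_eq, hdiag t]
  · simp only [Matrix.sub_apply, Matrix.diagonal_apply_ne _ (Ne.symm htu)]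
    simp [aRow, Pi.single_apply, htu, mul_sub, Finset.sum_sub_distrib, mul_ite, mul_one, mul_zero,
      Finset.sum_ite_eq]

open Classical in
lemma forced_sum (C : Matrix X X ℝ) (κ lam : X → ℝ) (hdiag : ∀ x, C x x = 0)
    (hlam : ∀ x, lam x = κ x + ∑ y, C x y) (x y : X) :
    ∑ f : X → Option X,
        (if IsSpanningArbo f ∧ f x = some y then
          ∏ u, (f u).elim (κ u) (fun v => C u v) else 0)
      = ((Matrix.diagonal lam - C).updateRow x ((C x y) • aRow x (some y))).det := by
  classical
  set s : X → Finset (Option X) := fun u => if u = x then {some y} else Finset.univ with hsdef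
  have hmat : (Matrix.diagonal lam - C).updateRow x ((C x y) • aRow x (some y))
      = Matrix.of fun u => ∑ o ∈ s u, (o.elim (κ u) (fun v => C u v)) • aRow u o := by
    ext u t
    rcases eq_or_ne u x with rfl | hux
    · rw [Matrix.updateRow_self]
      simp [hsdef]
    · rw [Matrix.updateRow_ne hux]
      have h := congrFun (row_sum C κ lam hdiag hlam u) t
      rw [h]
      simp [hsdef, hux]
  rw [hmat, det_expand C κ s]
  have hpi : Fintype.piFinset s = Finset.univ.filter (fun f : X → Option X => f x = some y) := by
    ext f
    simp only [Fintype.mem_piFinset, Finset.mem_filter, Finset.mem_univ, true_and, hsdef]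
    constructor
    · intro h
      have := h x
      simpa using this
    · intro h u
      rcases eq_or_ne u x with rfl | hux
      · simpa using h
      · simp [hux]
  rw [hpi, Finset.sum_filter]
  refine (Finset.sum_congr rfl fun f _ => ?_).symm
  by_cases h1 : IsSpanningArbo f <;> by_cases h2 : f x = some y <;> simp [h1, h2]

end Helpers

open Classical in
/-- Kirchhoff's theorem: the probability that the unoriented edge `{x,y}`
belongs to the random spanning tree is `C_{x,y}(G^{x,x}+G^{y,y}-2G^{x,y})`. -/
theorem kirchhoff_edge_probability {X : Type*} [Fintype X] [DecidableEq X]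
    (C : Matrix X X ℝ) (κ lam : X → ℝ)
    (hsymm : ∀ x y, C x y = C y x) (hC : ∀ x y, 0 ≤ C x y)
    (hdiag : ∀ x, C x x = 0) (hκ : ∀ x, 0 ≤ κ x)
    (hlam : ∀ x, lam x = κ x + ∑ y, C x y)
    (hpd : (Matrix.diagonal lam - C).PosDef)
    (G : Matrix X X ℝ) (hG : G = (Matrix.diagonal lam - C)⁻¹)
    (x y : X) (hxy : x ≠ y) :
    ∑ f : X → Option X,
        (if IsSpanningArbo f ∧ (f x = some y ∨ f y = some x) then
          ∏ u, (f u).elim (κ u) (fun v => C u v) else 0)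
      = (Matrix.diagonal lam - C).det *
          (C x y * (G x x + G y y - 2 * G x y)) := by
  classical
  set M : Matrix X X ℝ := Matrix.diagonal lam - C with hM
  have hsplit : ∀ f : X → Option X,
      (if IsSpanningArbo f ∧ (f x = some y ∨ f y = some x) then
          ∏ u, (f u).elim (κ u) (fun v => C u v) else 0)
        = (if IsSpanningArbo f ∧ f x = some y then
            ∏ u, (f u).elim (κ u) (fun v => C u v) else 0)
          + (if IsSpanningArbo f ∧ f y = some x then
            ∏ u, (f u).elim (κ u) (fun v => C u v) else 0) := by
    intro f
    by_cases h1 : IsSpanningArbo f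
    · by_cases h2 : f x = some y
      · by_cases h3 : f y = some x
        · exact absurd (no_two_cycle h1 h2 h3) id
        · simp [h1, h2, h3]
      · by_cases h3 : f y = some x <;> simp [h1, h2, h3]
    · simp [h1]
  rw [Finset.sum_congr rfl (fun f _ => hsplit f), Finset.sum_add_distrib,
    forced_sum C κ lam hdiag hlam x y, forced_sum C κ lam hdiag hlam y x]
  -- determinant computations
  have hdet0 : M.det ≠ 0 := ne_of_gt hpd.det_pos
  have hadj : ∀ i j : X, Matrix.adjugate M i j = M.det * G i j := by
    have hinv : M⁻¹ = (M.det)⁻¹ • Matrix.adjugate M := by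
      rw [Matrix.inv_def, Ring.inverse_eq_inv']
    intro i j
    have := congrFun (congrFun (hG.trans hinv) i) j
    rw [Matrix.smul_apply, smul_eq_mul] at this
    rw [this]
    field_simp
  have hGsym : G x y = G y x := by
    have hMT : Mᵀ = M := by
      rw [hM, Matrix.transpose_sub, Matrix.diagonal_transpose]
      congr 1
      ext i j
      exact hsymm j i
    have hGT : Gᵀ = G := by
      rw [hG, Matrix.transpose_nonsing_inv, hMT]
    have h := congrFun (congrFun hGT y) x
    simpa [Matrix.transpose_apply] using h
  have key : ∀ a b : X, (M.updateRow a ((C a b) • aRow a (some b))).det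
      = C a b * (Matrix.adjugate M a a - Matrix.adjugate M b a) := by
    intro a b
    rw [Matrix.det_updateRow_smul]
    have hrow : aRow a (some b)
        = (Pi.single a 1 : X → ℝ) + (-1 : ℝ) • (Pi.single b 1 : X → ℝ) := by
      funext t
      simp [aRow]
      ring
    rw [hrow, Matrix.det_updateRow_add, Matrix.det_updateRow_smul,
      ← Matrix.adjugate_apply, ← Matrix.adjugate_apply]
    ring
  rw [key x y, key y x, hadj, hadj, hadj, hadj, hsymm y x, ← hGsym]
  ring
end

section
/- Transfer current theorem: for distinct unoriented edges ξ₁,…,ξ_k, the probability that all of them belong to the random spanning tree equals (∏_{i=1}^k C_{ξ_i}) · det( (K^{ξ_i,ξ_j})_{1≤i,j≤k} ), where K^{(x,y),(u,v)} = G^{x,u} + G^{y,v} − G^{x,v} − G^{y,u}; this determinant is independent of the chosen orientations of the edges. -/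
open Matrix Finset

/-- The transfer matrix indexed by oriented links. -/
def transferK {X : Type*} (G : Matrix X X ℝ) (p q : X × X) : ℝ :=
  G p.1 q.1 + G p.2 q.2 - G p.1 q.2 - G p.2 q.1

namespace TC

set_option linter.unusedSectionVars false

variable {X : Type*} [Fintype X] [DecidableEq X]

/-- height of a vertex in an arborescence -/
noncomputable def ht (f : X → Option X) (hf : IsSpanningArbo f) (x : X) : ℕ :=
  Nat.find (hf x)

lemma ht_spec (f : X → Option X) (hf : IsSpanningArbo f) (x : X) :
    (fun o : Option X => o.bind f)^[ht f hf x] (some x) = none :=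
  Nat.find_spec (hf x)

lemma ht_lt (f : X → Option X) (hf : IsSpanningArbo f) {x y : X} (h : f x = some y) :
    ht f hf y < ht f hf x := by
  have hpos : 0 < ht f hf x := by
    rcases Nat.eq_zero_or_pos (ht f hf x) with h0 | h0
    · have := ht_spec f hf x
      rw [h0] at this
      simp at this
    · exact h0
  have hs := ht_spec f hf x
  rw [← Nat.succ_pred_eq_of_pos hpos, Function.iterate_succ_apply] at hs
  have hb : (some x).bind f = some y := by simp [h]
  rw [hb] at hs
  have h2 : ht f hf y ≤ Nat.pred (ht f hf x) := Nat.find_le hs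
  rw [Nat.pred_eq_sub_one] at h2
  omega

/-- The 0/1 "incidence" rows of a parent map. -/
def rowE (f : X → Option X) : Matrix X X ℝ :=
  Matrix.of fun x => (f x).elim (Pi.single x 1) (fun y => Pi.single x 1 - Pi.single y 1)

lemma rowE_apply (f : X → Option X) (x w : X) :
    rowE f x w = (if w = x then (1:ℝ) else 0) -
      ((f x).elim 0 (fun y => if w = y then (1:ℝ) else 0)) := by
  cases h : f x <;> simp [rowE, h, Pi.single_apply]

lemma detE_arbo (f : X → Option X) (hf : IsSpanningArbo f) : (rowE f).det = 1 := by
  have hself : ∀ x, f x ≠ some x := by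
    intro x hx
    exact absurd (ht_lt f hf hx) (lt_irrefl _)
  rw [Matrix.det_apply]
  rw [Finset.sum_eq_single (1 : Equiv.Perm X)]
  · have h1 : ∀ i : X, rowE f ((1 : Equiv.Perm X) i) i = 1 := by
      intro i
      rw [Equiv.Perm.one_apply, rowE_apply]
      cases h : f i with
      | none => simp
      | some y =>
        have hne : i ≠ y := fun hh => hself i (hh ▸ h)
        simp [h, hne]
    rw [Finset.prod_congr rfl (fun i _ => h1 i)]
    simp
  · intro σ _ hσ
    have hP : ∏ i, rowE f (σ i) i = 0 := by
      by_contra hP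
      have hfac : ∀ i, rowE f (σ i) i ≠ 0 := by
        intro i
        exact Finset.prod_ne_zero_iff.mp hP i (mem_univ i)
      have key : ∀ i, σ i ≠ i → f (σ i) = some i := by
        intro i hne
        have h := hfac i
        rw [rowE_apply] at h
        rw [if_neg (fun hh : i = σ i => hne hh.symm)] at h
        cases hfs : f (σ i) with
        | none => rw [hfs] at h; simp at h
        | some y =>
          rw [hfs] at h
          simp only [Option.elim] at h
          by_cases hiy : i = y
          · exact congrArg some hiy.symm
          · rw [if_neg hiy] at h; simp at h
      have hle : ∀ i, ht f hf i ≤ ht f hf (σ i) := by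
        intro i
        by_cases hne : σ i = i
        · rw [hne]
        · exact le_of_lt (ht_lt f hf (key i hne))
      obtain ⟨i₀, hi₀⟩ : ∃ i, σ i ≠ i := by
        by_contra hall
        push_neg at hall
        exact hσ (Equiv.ext hall)
      have hlt : ∑ i, ht f hf i < ∑ i, ht f hf (σ i) :=
        Finset.sum_lt_sum (fun i _ => hle i)
          ⟨i₀, mem_univ _, ht_lt f hf (key i₀ hi₀)⟩
      have heq : ∑ i, ht f hf (σ i) = ∑ i, ht f hf i := Equiv.sum_comp σ (ht f hf)
      omega
    rw [hP]
    simp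
  · intro h
    exact absurd (mem_univ _) h

lemma detE_not_arbo (f : X → Option X) (hf : ¬ IsSpanningArbo f) : (rowE f).det = 0 := by
  rw [IsSpanningArbo] at hf
  push_neg at hf
  obtain ⟨x₀, hx₀⟩ := hf
  have hsome : ∀ k, ((fun o : Option X => o.bind f)^[k] (some x₀)).isSome := by
    intro k
    rw [Option.isSome_iff_ne_none]
    exact hx₀ k
  set s : ℕ → X := fun k => ((fun o : Option X => o.bind f)^[k] (some x₀)).get (hsome k)
    with hs_def
  have hs : ∀ k, (fun o : Option X => o.bind f)^[k] (some x₀) = some (s k) := by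
    intro k
    exact (Option.some_get (hsome k)).symm
  have hstep : ∀ k, f (s k) = some (s (k + 1)) := by
    intro k
    have h1 := hs (k + 1)
    rw [Function.iterate_succ_apply', hs k] at h1
    simpa using h1
  have hex : ∃ j, ∃ i, i < j ∧ s i = s j := by
    obtain ⟨a, b, hab, heq⟩ :=
      Fintype.exists_ne_map_eq_of_card_lt (fun a : Fin (Fintype.card X + 1) => s a)
        (by simp)
    rcases lt_or_gt_of_ne (fun h : (a : ℕ) = b => hab (Fin.ext h)) with h | h
    · exact ⟨b, a, h, heq⟩
    · exact ⟨a, b, h, heq.symm⟩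
  classical
  set j := Nat.find hex with hj_def
  obtain ⟨i, hij, hsij⟩ := Nat.find_spec hex
  have hinj : ∀ a b, a < b → b < j → s a ≠ s b := by
    intro a b hab hbj hEq
    exact Nat.find_min hex hbj ⟨a, hab, hEq⟩
  set T : Finset X := (Finset.Ico i j).image s with hT_def
  set u : X → ℝ := fun w => if w ∈ T then 1 else 0 with hu_def
  have hu0 : u ≠ 0 := by
    intro h
    have : u (s i) = 0 := by rw [h]; rfl
    rw [hu_def] at this
    simp only [hT_def] at this
    rw [if_pos (Finset.mem_image_of_mem s (by simp [Finset.mem_Ico]; omega))] at this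
    norm_num at this
  have hvm : u ᵥ* (rowE f) = 0 := by
    funext w
    have h1 : (u ᵥ* (rowE f)) w = ∑ x, u x * rowE f x w := rfl
    rw [h1, hu_def]
    simp only [ite_mul, one_mul, zero_mul]
    rw [Finset.sum_ite_mem, Finset.univ_inter]
    rw [hT_def, Finset.sum_image (by
      intro a ha b hb hEq
      rcases lt_trichotomy a b with h | h | h
      · exact absurd hEq (hinj a b h (Finset.mem_Ico.mp hb).2)
      · exact h
      · exact absurd hEq.symm (hinj b a h (Finset.mem_Ico.mp ha).2))]
    have hrow : ∀ t, rowE f (s t) w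
        = (if w = s t then (1:ℝ) else 0) - (if w = s (t+1) then (1:ℝ) else 0) := by
      intro t
      rw [rowE_apply, hstep t]
      rfl
    rw [Finset.sum_congr rfl (fun t _ => hrow t)]
    rw [Finset.sum_Ico_eq_sum_range]
    have htel := Finset.sum_range_sub' (fun t => if w = s (i + t) then (1:ℝ) else 0) (j - i)
    simp only [Pi.zero_apply]
    rw [Finset.sum_congr rfl (fun t ht => by
      rw [show i + t + 1 = i + (t+1) by omega])]
    rw [htel, show i + (j - i) = j by omega]
    rw [← hj_def] at hsij
    simp [hsij]
  exact Matrix.exists_vecMul_eq_zero_iff.mp ⟨u, hu0, hvm⟩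

open Classical in
theorem kirchhoff (C : Matrix X X ℝ) (κ : X → ℝ) :
    (Matrix.diagonal (fun x => κ x + ∑ y, C x y) - C).det
      = ∑ f : X → Option X,
          (if IsSpanningArbo f then ∏ u, (f u).elim (κ u) (fun v => C u v) else 0) := by
  set r : X → Option X → (X → ℝ) := fun x o =>
    o.elim (κ x • (Pi.single x 1 : X → ℝ))
      (fun y => C x y • ((Pi.single x 1 : X → ℝ) - Pi.single y 1)) with hr
  have hM : Matrix.diagonal (fun x => κ x + ∑ y, C x y) - C
      = Matrix.of (fun x => ∑ o : Option X, r x o) := by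
    ext x w
    rw [Matrix.of_apply]
    rw [Fintype.sum_option]
    simp only [Pi.add_apply, Finset.sum_apply]
    have hnone : r x none w = κ x * (if w = x then 1 else 0) := by
      simp [hr, Pi.single_apply]
    have hsome2 : ∀ y, r x (some y) w
        = C x y * (if w = x then 1 else 0) - C x y * (if w = y then 1 else 0) := by
      intro y
      simp [hr, Pi.single_apply, mul_sub]
    rw [hnone, Finset.sum_congr rfl (fun y _ => hsome2 y), Finset.sum_sub_distrib]
    have h1 : ∑ y, C x y * (if w = y then (1:ℝ) else 0) = C x w := by
      simp [mul_ite, mul_one, mul_zero, Finset.sum_ite_eq]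
    rw [h1]
    by_cases h : x = w
    · subst h
      simp [Matrix.sub_apply, Matrix.diagonal_apply_eq]
      ring
    · have hwx : ¬ w = x := fun hh => h hh.symm
      simp [Matrix.sub_apply, Matrix.diagonal_apply_ne _ h, hwx]
  have h2 : (Matrix.of fun x => ∑ o : Option X, r x o).det
      = ∑ g : X → Option X, (Matrix.of fun x => r x (g x)).det := by
    exact (Matrix.detRowAlternating (R := ℝ) (n := X)).toMultilinearMap.map_sum (g := r)
  have h3 : ∀ g : X → Option X, (Matrix.of fun x => r x (g x)).det
      = (∏ u, (g u).elim (κ u) (fun v => C u v)) * (rowE g).det := by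
    intro g
    have hrow : (fun x => r x (g x))
        = fun x => ((g x).elim (κ x) (fun v => C x v)) • (rowE g x) := by
      funext x
      funext w
      cases h : g x <;>
        simp [hr, rowE, h, Pi.single_apply]
    show (Matrix.detRowAlternating (R := ℝ) (n := X)).toMultilinearMap (fun x => r x (g x))
        = _
    rw [hrow]
    refine (MultilinearMap.map_smul_univ _ (fun x => (g x).elim (κ x) fun v => C x v) (rowE g)).trans ?_
    rw [smul_eq_mul]
    rfl
  rw [hM, h2]
  apply Finset.sum_congr rfl
  intro g _
  rw [h3 g]
  by_cases harbo : IsSpanningArbo g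
  · rw [detE_arbo g harbo, if_pos harbo, mul_one]
  · rw [detE_not_arbo g harbo, if_neg harbo, mul_zero]

end TC

namespace TCB

variable {n : Type*} [Fintype n] [DecidableEq n]

lemma det_fromBlocks_one (A : Matrix n n ℝ) (u v : n → ℝ) :
    (Matrix.fromBlocks A (Matrix.of fun i (_ : Unit) => u i)
      (Matrix.of fun (_ : Unit) j => v j) (1 : Matrix Unit Unit ℝ)).det
      = (A - Matrix.vecMulVec u v).det := by
  have hfac : Matrix.fromBlocks A (Matrix.of fun i (_ : Unit) => u i)
        (Matrix.of fun (_ : Unit) j => v j) (1 : Matrix Unit Unit ℝ)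
      = Matrix.fromBlocks (1 : Matrix n n ℝ) (Matrix.of fun i (_ : Unit) => u i) 0 1 *
        Matrix.fromBlocks (A - Matrix.vecMulVec u v) 0
          (Matrix.of fun (_ : Unit) j => v j) 1 := by
    rw [Matrix.fromBlocks_multiply]
    have hUV : (Matrix.of fun i (_ : Unit) => u i) * (Matrix.of fun (_ : Unit) j => v j)
        = Matrix.vecMulVec u v := by
      ext i j
      simp [Matrix.mul_apply, Matrix.vecMulVec_apply]
    simp [hUV]
  rw [hfac, Matrix.det_mul, Matrix.det_fromBlocks_zero₂₁, Matrix.det_fromBlocks_zero₁₂]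
  simp

lemma det_fromBlocks_border (A : Matrix n n ℝ) (u v : n → ℝ) :
    (Matrix.fromBlocks A (Matrix.of fun i (_ : Unit) => u i)
      (Matrix.of fun (_ : Unit) j => v j) (0 : Matrix Unit Unit ℝ)).det
      = (A - Matrix.vecMulVec u v).det - A.det := by
  set N₀ := Matrix.fromBlocks A (Matrix.of fun i (_ : Unit) => u i)
      (Matrix.of fun (_ : Unit) j => v j) (0 : Matrix Unit Unit ℝ) with hN₀
  have e1 : Matrix.fromBlocks A (Matrix.of fun i (_ : Unit) => u i)
        (Matrix.of fun (_ : Unit) j => v j) (1 : Matrix Unit Unit ℝ)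
      = N₀.updateRow (Sum.inr ())
          (Sum.elim v (fun _ => 0) + Sum.elim (fun _ => 0) (fun _ => 1)) := by
    ext p q
    rcases p with p | p
    · rw [Matrix.updateRow_ne (by simp)]
      rcases q with q | q <;> simp [hN₀]
    · rcases q with q | q
      · simp [Matrix.updateRow_apply, hN₀]
      · simp [Matrix.updateRow_apply, Matrix.one_apply, hN₀]
  have e2 := det_fromBlocks_one A u v
  rw [e1, Matrix.det_updateRow_add] at e2
  have e3 : N₀.updateRow (Sum.inr ()) (Sum.elim v (fun _ => 0)) = N₀ := by
    have : (Sum.elim v (fun _ => (0:ℝ))) = N₀ (Sum.inr ()) := by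
      funext q
      rcases q with q | q <;> simp [hN₀]
    rw [this, Matrix.updateRow_eq_self]
  have e4 : N₀.updateRow (Sum.inr ()) (Sum.elim (fun _ => (0:ℝ)) (fun _ => 1))
      = Matrix.fromBlocks A (Matrix.of fun i (_ : Unit) => u i) 0 1 := by
    ext p q
    rcases p with p | p
    · rw [Matrix.updateRow_ne (by simp)]
      rcases q with q | q <;> simp [hN₀]
    · rcases q with q | q <;> simp [Matrix.updateRow_apply, Matrix.one_apply, hN₀]
  rw [e3, e4, Matrix.det_fromBlocks_zero₂₁] at e2
  simp only [Matrix.det_one, mul_one] at e2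
  linarith

lemma det_sub_smul_vecMulVec (A : Matrix n n ℝ) (u v : n → ℝ) (c : ℝ) :
    (A - c • Matrix.vecMulVec u v).det
      = A.det + c * (Matrix.fromBlocks A (Matrix.of fun i (_ : Unit) => u i)
          (Matrix.of fun (_ : Unit) j => v j) (0 : Matrix Unit Unit ℝ)).det := by
  have h1 : A - c • Matrix.vecMulVec u v = A - Matrix.vecMulVec (c • u) v := by
    ext i j
    simp [Matrix.vecMulVec_apply, Matrix.sub_apply]
  have h2 := det_fromBlocks_border A (c • u) v
  have h3 : (Matrix.fromBlocks A (Matrix.of fun i (_ : Unit) => (c • u) i)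
        (Matrix.of fun (_ : Unit) j => v j) (0 : Matrix Unit Unit ℝ))
      = (Matrix.fromBlocks A (Matrix.of fun i (_ : Unit) => u i)
          (Matrix.of fun (_ : Unit) j => v j) (0 : Matrix Unit Unit ℝ)).updateCol
            (Sum.inr ()) (c • Sum.elim u (fun _ => 0)) := by
    ext p q
    rcases q with q | q
    · rw [Matrix.updateCol_ne (by simp)]
      rcases p with p | p <;> simp
    · rcases p with p | p <;> simp [Matrix.updateCol_apply]
  have h4 : ((Matrix.fromBlocks A (Matrix.of fun i (_ : Unit) => u i)
        (Matrix.of fun (_ : Unit) j => v j) (0 : Matrix Unit Unit ℝ)).updateCol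
          (Sum.inr ()) (c • Sum.elim u (fun _ => 0))).det
      = c * (Matrix.fromBlocks A (Matrix.of fun i (_ : Unit) => u i)
          (Matrix.of fun (_ : Unit) j => v j) (0 : Matrix Unit Unit ℝ)).det := by
    rw [Matrix.det_updateCol_smul]
    congr 1
    have : (Sum.elim u (fun _ => (0:ℝ)))
        = fun p => (Matrix.fromBlocks A (Matrix.of fun i (_ : Unit) => u i)
          (Matrix.of fun (_ : Unit) j => v j) (0 : Matrix Unit Unit ℝ)) p (Sum.inr ()) := by
      funext p
      rcases p with p | p <;> simp
    rw [this]
    congr 1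
    apply Matrix.updateCol_eq_self
  have h5 : (Matrix.fromBlocks A (Matrix.of fun i (_ : Unit) => (c • u) i)
        (Matrix.of fun (_ : Unit) j => v j) (0 : Matrix Unit Unit ℝ)).det
      = c * (Matrix.fromBlocks A (Matrix.of fun i (_ : Unit) => u i)
          (Matrix.of fun (_ : Unit) j => v j) (0 : Matrix Unit Unit ℝ)).det := by
    rw [h3]
    exact h4
  rw [h1]
  linarith [h2, h5]

end TCB

namespace TCM

open TC TCB

set_option linter.unusedSectionVars false
set_option maxHeartbeats 1000000

variable {X : Type*} [Fintype X] [DecidableEq X]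

def Bmat {k : ℕ} (ξ : Fin k → X × X) : Matrix X (Fin k) ℝ :=
  Matrix.of fun u i => (if u = (ξ i).1 then (1:ℝ) else 0) - (if u = (ξ i).2 then 1 else 0)

def ec (X : Type*) (k : ℕ) : (X ⊕ Fin k) ⊕ Unit ≃ X ⊕ Fin (k+1) where
  toFun p := match p with
    | .inl (.inl x) => .inl x
    | .inl (.inr i) => .inr i.succ
    | .inr _ => .inr 0
  invFun q := match q with
    | .inl x => .inl (.inl x)
    | .inr i => Fin.cases (Sum.inr ()) (fun j => Sum.inl (Sum.inr j)) i
  left_inv p := by rcases p with (x | i) | u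
                   · rfl
                   · simp
                   · simp
  right_inv q := by
    rcases q with x | i
    · rfl
    · induction i using Fin.cases <;> simp

@[simp] lemma ec_inl_inl (k : ℕ) (x : X) : ec X k (Sum.inl (Sum.inl x)) = Sum.inl x := rfl
@[simp] lemma ec_inl_inr (k : ℕ) (i : Fin k) : ec X k (Sum.inl (Sum.inr i)) = Sum.inr i.succ := rfl
@[simp] lemma ec_inr (k : ℕ) (u : Unit) : ec X k (Sum.inr u) = Sum.inr 0 := rfl

open Classical in
theorem claimA (k : ℕ) :
    ∀ (C : Matrix X X ℝ) (κ : X → ℝ), (∀ x y, C x y = C y x) →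
    ∀ (ξ : Fin k → X × X), (∀ i, (ξ i).1 ≠ (ξ i).2) →
    (∀ i j, i ≠ j → ({(ξ i).1, (ξ i).2} : Finset X) ≠ {(ξ j).1, (ξ j).2}) →
    (∑ f : X → Option X,
        if IsSpanningArbo f ∧
            (∀ i, f (ξ i).1 = some (ξ i).2 ∨ f (ξ i).2 = some (ξ i).1)
          then ∏ u, (f u).elim (κ u) (fun v => C u v) else 0)
      = (-1)^k * (∏ i, C (ξ i).1 (ξ i).2) *
        (Matrix.fromBlocks (Matrix.diagonal (fun x => κ x + ∑ y, C x y) - C)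
          (Bmat ξ) (Bmat ξ)ᵀ 0).det := by
  induction k with
  | zero =>
    intro C κ hsymm ξ hne hdist
    have hdet : (Matrix.fromBlocks (Matrix.diagonal (fun x => κ x + ∑ y, C x y) - C)
          (Bmat ξ) (Bmat ξ)ᵀ (0 : Matrix (Fin 0) (Fin 0) ℝ)).det
        = (Matrix.diagonal (fun x => κ x + ∑ y, C x y) - C).det := by
      have hEq : Matrix.fromBlocks (Matrix.diagonal (fun x => κ x + ∑ y, C x y) - C)
            (Bmat ξ) (Bmat ξ)ᵀ (0 : Matrix (Fin 0) (Fin 0) ℝ)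
          = (Matrix.diagonal (fun x => κ x + ∑ y, C x y) - C).submatrix
              (Equiv.sumEmpty X (Fin 0)) (Equiv.sumEmpty X (Fin 0)) := by
        ext p q
        rcases p with p | p
        · rcases q with q | q
          · simp
          · exact q.elim0
        · exact p.elim0
      rw [hEq, Matrix.det_submatrix_equiv_self]
    rw [hdet]
    simp only [pow_zero, one_mul, Finset.univ_eq_empty, Finset.prod_empty,
      IsEmpty.forall_iff, and_true]
    rw [← TC.kirchhoff C κ]
  | succ k ih =>
    intro C κ hsymm ξ hne hdist
    set x₀ := (ξ 0).1
    set y₀ := (ξ 0).2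
    have hxy : x₀ ≠ y₀ := hne 0
    set ξ' : Fin k → X × X := fun i => ξ i.succ with hξ'
    set C' : Matrix X X ℝ :=
      Matrix.of fun u v => if (u = x₀ ∧ v = y₀) ∨ (u = y₀ ∧ v = x₀) then 0 else C u v
      with hC'
    have hC'app : ∀ u v, C' u v
        = if (u = x₀ ∧ v = y₀) ∨ (u = y₀ ∧ v = x₀) then 0 else C u v := fun u v => rfl
    have hC'symm : ∀ x y, C' x y = C' y x := by
      intro x y
      rw [hC'app, hC'app]
      by_cases h : (x = x₀ ∧ y = y₀) ∨ (x = y₀ ∧ y = x₀)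
      · rw [if_pos h, if_pos (by tauto)]
      · rw [if_neg h, if_neg (by tauto), hsymm]
    have hne' : ∀ i, (ξ' i).1 ≠ (ξ' i).2 := fun i => hne i.succ
    have hdist' : ∀ i j, i ≠ j →
        ({(ξ' i).1, (ξ' i).2} : Finset X) ≠ {(ξ' j).1, (ξ' j).2} := by
      intro i j hij
      exact hdist i.succ j.succ (fun h => hij (Fin.succ_injective _ h))
    have hCedge : ∀ i : Fin k, C' (ξ' i).1 (ξ' i).2 = C (ξ' i).1 (ξ' i).2 := by
      intro i
      rw [hC'app, if_neg]
      rintro (⟨h1, h2⟩ | ⟨h1, h2⟩)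
      · exact hdist i.succ 0 (Fin.succ_ne_zero i) (by rw [h1, h2])
      · exact hdist i.succ 0 (Fin.succ_ne_zero i) (by rw [h1, h2, Finset.pair_comm])
    set b : X → ℝ := fun u => (if u = x₀ then (1:ℝ) else 0) - (if u = y₀ then 1 else 0)
      with hb
    -- the modified matrix is a rank one update
    have hC'eq : ∀ u w, C' u w = C u w
        - C x₀ y₀ * ((if u = x₀ then (1:ℝ) else 0) * (if w = y₀ then 1 else 0)
            + (if u = y₀ then (1:ℝ) else 0) * (if w = x₀ then 1 else 0)) := by
      intro u w
      have hyx : C y₀ x₀ = C x₀ y₀ := hsymm y₀ x₀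
      rw [hC'app]
      by_cases h1 : u = x₀ <;> by_cases h2 : u = y₀ <;>
        by_cases h3 : w = x₀ <;> by_cases h4 : w = y₀ <;>
          first
            | exact absurd (h1.symm.trans h2) hxy
            | exact absurd (h3.symm.trans h4) hxy
            | (simp [h1, h2, h3, h4, hyx, hxy, hxy.symm]; try ring)
    have hsum : ∀ u, ∑ v, C' u v = (∑ v, C u v)
        - (if u = x₀ then C x₀ y₀ else 0) - (if u = y₀ then C x₀ y₀ else 0) := by
      intro u
      rw [Finset.sum_congr rfl (fun v _ => hC'eq u v)]
      rw [Finset.sum_sub_distrib]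
      simp only [mul_add]
      rw [Finset.sum_add_distrib]
      simp only [← mul_assoc]
      simp only [mul_ite, mul_one, mul_zero, ite_mul, zero_mul, one_mul]
      rw [Finset.sum_ite_eq' Finset.univ y₀ (fun _ => if u = x₀ then C x₀ y₀ else 0)]
      rw [Finset.sum_ite_eq' Finset.univ x₀ (fun _ => if u = y₀ then C x₀ y₀ else 0)]
      simp only [Finset.mem_univ, if_true]
      ring
    have hM' : Matrix.diagonal (fun x => κ x + ∑ y, C' x y) - C'
        = (Matrix.diagonal (fun x => κ x + ∑ y, C x y) - C)
          - (C x₀ y₀) • Matrix.vecMulVec b b := by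
      ext u w
      simp only [Matrix.sub_apply, Matrix.smul_apply, smul_eq_mul,
        Matrix.vecMulVec_apply]
      rw [hC'eq u w]
      by_cases huw : u = w
      · subst huw
        rw [Matrix.diagonal_apply_eq, Matrix.diagonal_apply_eq, hsum u, hb]
        by_cases h1 : u = x₀ <;> by_cases h2 : u = y₀ <;>
          first
            | exact absurd (h1.symm.trans h2) hxy
            | (simp [h1, h2, hxy, hxy.symm]; try ring)
      · rw [Matrix.diagonal_apply_ne _ huw, Matrix.diagonal_apply_ne _ huw, hb]
        by_cases h1 : u = x₀ <;> by_cases h2 : u = y₀ <;>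
          by_cases h3 : w = x₀ <;> by_cases h4 : w = y₀ <;>
            first
              | exact absurd (h1.symm.trans h2) hxy
              | exact absurd (h3.symm.trans h4) hxy
              | exact absurd (h1.trans h3.symm) huw
              | exact absurd (h2.trans h4.symm) huw
              | (simp [h1, h2, h3, h4, hxy, Ne.symm hxy, hsymm y₀ x₀]; try ring)
    -- the combinatorial splitting
    have hcond : ∀ f : X → Option X,
        (IsSpanningArbo f ∧
            (∀ i : Fin (k+1), f (ξ i).1 = some (ξ i).2 ∨ f (ξ i).2 = some (ξ i).1))
        ↔ ((IsSpanningArbo f ∧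
            (∀ i : Fin k, f (ξ' i).1 = some (ξ' i).2 ∨ f (ξ' i).2 = some (ξ' i).1))
            ∧ (f x₀ = some y₀ ∨ f y₀ = some x₀)) := by
      intro f
      constructor
      · rintro ⟨ha, hall⟩
        exact ⟨⟨ha, fun i => hall i.succ⟩, hall 0⟩
      · rintro ⟨⟨ha, hs⟩, h0⟩
        exact ⟨ha, fun i => Fin.cases h0 hs i⟩
    have hsplit : (∑ f : X → Option X,
          if IsSpanningArbo f ∧
              (∀ i, f (ξ i).1 = some (ξ i).2 ∨ f (ξ i).2 = some (ξ i).1)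
            then ∏ u, (f u).elim (κ u) (fun v => C u v) else 0)
        = (∑ f : X → Option X,
            if IsSpanningArbo f ∧
                (∀ i, f (ξ' i).1 = some (ξ' i).2 ∨ f (ξ' i).2 = some (ξ' i).1)
              then ∏ u, (f u).elim (κ u) (fun v => C u v) else 0)
          - (∑ f : X → Option X,
            if IsSpanningArbo f ∧
                (∀ i, f (ξ' i).1 = some (ξ' i).2 ∨ f (ξ' i).2 = some (ξ' i).1)
              then ∏ u, (f u).elim (κ u) (fun v => C' u v) else 0) := by
      rw [← Finset.sum_sub_distrib]
      apply Finset.sum_congr rfl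
      intro f _
      by_cases hP : IsSpanningArbo f ∧
          (∀ i : Fin k, f (ξ' i).1 = some (ξ' i).2 ∨ f (ξ' i).2 = some (ξ' i).1)
      · by_cases hU : f x₀ = some y₀ ∨ f y₀ = some x₀
        · rw [if_pos ((hcond f).mpr ⟨hP, hU⟩), if_pos hP, if_pos hP]
          have hzero : ∏ u, (f u).elim (κ u) (fun v => C' u v) = 0 := by
            rcases hU with h | h
            · apply Finset.prod_eq_zero (Finset.mem_univ x₀)
              rw [h]
              show C' x₀ y₀ = 0
              rw [hC'app, if_pos (Or.inl ⟨rfl, rfl⟩)]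
            · apply Finset.prod_eq_zero (Finset.mem_univ y₀)
              rw [h]
              show C' y₀ x₀ = 0
              rw [hC'app, if_pos (Or.inr ⟨rfl, rfl⟩)]
          rw [hzero]
          ring
        · rw [if_neg (fun hc => hU ((hcond f).mp hc).2), if_pos hP, if_pos hP]
          have heqw : ∏ u, (f u).elim (κ u) (fun v => C' u v)
              = ∏ u, (f u).elim (κ u) (fun v => C u v) := by
            apply Finset.prod_congr rfl
            intro u _
            cases hfu : f u with
            | none => rfl
            | some v =>
              show C' u v = C u v
              rw [hC'app, if_neg]
              rintro (⟨h1, h2⟩ | ⟨h1, h2⟩)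
              · exact hU (Or.inl (by rw [← h1, ← h2]; exact hfu))
              · exact hU (Or.inr (by rw [← h1, ← h2]; exact hfu))
          rw [heqw]
          ring
      · rw [if_neg (fun hc => hP ((hcond f).mp hc).1), if_neg hP, if_neg hP]
        ring
    -- determinant identity
    set M : Matrix X X ℝ := Matrix.diagonal (fun x => κ x + ∑ y, C x y) - C with hM
    set ub : X ⊕ Fin k → ℝ := Sum.elim b (fun _ => 0) with hub
    have hN' : Matrix.fromBlocks (Matrix.diagonal (fun x => κ x + ∑ y, C' x y) - C')
          (Bmat ξ') (Bmat ξ')ᵀ 0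
        = Matrix.fromBlocks M (Bmat ξ') (Bmat ξ')ᵀ 0
          - (C x₀ y₀) • Matrix.vecMulVec ub ub := by
      ext p q
      rcases p with p | p <;> rcases q with q | q
      · have := congrFun (congrFun (congrArg (fun (A : Matrix X X ℝ) (i j : X) => A i j) hM') p) q
        simpa [Matrix.vecMulVec_apply, hub] using this
      · simp [Matrix.vecMulVec_apply, hub]
      · simp [Matrix.vecMulVec_apply, hub]
      · simp [Matrix.vecMulVec_apply, hub]
    have hborder : (Matrix.fromBlocks M (Bmat ξ) (Bmat ξ)ᵀ
          (0 : Matrix (Fin (k+1)) (Fin (k+1)) ℝ)).submatrix (ec X k) (ec X k)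
        = Matrix.fromBlocks (Matrix.fromBlocks M (Bmat ξ') (Bmat ξ')ᵀ 0)
            (Matrix.of fun p (_ : Unit) => ub p)
            (Matrix.of fun (_ : Unit) q => ub q) (0 : Matrix Unit Unit ℝ) := by
      ext p q
      rcases p with (x | i) | u <;> rcases q with (x' | j) | u'
      · simp [Bmat]
      · simp [Bmat, hξ']
      · simp [Bmat, hub, hb]; rfl
      · simp [Bmat, hξ']
      · simp
      · simp [hub]
      · simp [Bmat, hub, hb]; rfl
      · simp [hub]
      · simp
    have hdetN' : (Matrix.fromBlocks (Matrix.diagonal (fun x => κ x + ∑ y, C' x y) - C')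
          (Bmat ξ') (Bmat ξ')ᵀ 0).det
        = (Matrix.fromBlocks M (Bmat ξ') (Bmat ξ')ᵀ 0).det
          + (C x₀ y₀) * (Matrix.fromBlocks M (Bmat ξ) (Bmat ξ)ᵀ
              (0 : Matrix (Fin (k+1)) (Fin (k+1)) ℝ)).det := by
      rw [hN', det_sub_smul_vecMulVec]
      congr 2
      rw [← Matrix.det_submatrix_equiv_self (ec X k), hborder]
    -- put everything together
    rw [hsplit,
      ih C κ hsymm ξ' hne' hdist',
      ih C' κ hC'symm ξ' hne' hdist',
      Finset.prod_congr rfl (fun i _ => hCedge i),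
      hdetN']
    rw [Fin.prod_univ_succ (fun i => C (ξ i).1 (ξ i).2)]
    rw [pow_succ]
    ring

end TCM


open Classical in
/-- Transfer current theorem (Pemantle): the probability that the distinct
unoriented edges `ξ₁,…,ξ_k` all belong to the random spanning tree equals
`(∏ C_{ξ_i}) det(K^{ξ_i,ξ_j})`, and this determinant does not depend on the
chosen orientation of the edges. -/
theorem transfer_current_theorem {X : Type*} [Fintype X] [DecidableEq X]
    (C : Matrix X X ℝ) (κ lam : X → ℝ)
    (hsymm : ∀ x y, C x y = C y x) (hC : ∀ x y, 0 ≤ C x y)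
    (hdiag : ∀ x, C x x = 0) (hκ : ∀ x, 0 ≤ κ x)
    (hlam : ∀ x, lam x = κ x + ∑ y, C x y)
    (hpd : (Matrix.diagonal lam - C).PosDef)
    (G : Matrix X X ℝ) (hG : G = (Matrix.diagonal lam - C)⁻¹)
    (k : ℕ) (ξ : Fin k → X × X)
    (hne : ∀ i, (ξ i).1 ≠ (ξ i).2)
    (hdist : ∀ i j, i ≠ j →
      ({(ξ i).1, (ξ i).2} : Finset X) ≠ {(ξ j).1, (ξ j).2}) :
    (∑ f : X → Option X,
        (if IsSpanningArbo f ∧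
            (∀ i, f (ξ i).1 = some (ξ i).2 ∨ f (ξ i).2 = some (ξ i).1) then
          ∏ u, (f u).elim (κ u) (fun v => C u v) else 0))
      = (Matrix.diagonal lam - C).det * (∏ i, C (ξ i).1 (ξ i).2) *
          (Matrix.of fun i j : Fin k => transferK G (ξ i) (ξ j)).det ∧
    ∀ ε : Fin k → Bool,
      (Matrix.of fun i j : Fin k =>
          transferK G (if ε i then ((ξ i).2, (ξ i).1) else ξ i)
            (if ε j then ((ξ j).2, (ξ j).1) else ξ j)).det
        = (Matrix.of fun i j : Fin k => transferK G (ξ i) (ξ j)).det := by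
  constructor
  · subst hG
    have hl : lam = fun x => κ x + ∑ y, C x y := funext hlam
    subst hl
    set M : Matrix X X ℝ := Matrix.diagonal (fun x => κ x + ∑ y, C x y) - C with hM
    haveI : Invertible M := M.invertibleOfIsUnitDet (hpd.det_pos.ne'.isUnit)
    rw [TCM.claimA k C κ hsymm ξ hne hdist]
    rw [Matrix.det_fromBlocks₁₁]
    rw [Matrix.invOf_eq_nonsing_inv, zero_sub, Matrix.det_neg, Fintype.card_fin]
    have hK : (TCM.Bmat ξ)ᵀ * M⁻¹ * TCM.Bmat ξ
        = Matrix.of fun i j : Fin k => transferK M⁻¹ (ξ i) (ξ j) := by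
      ext i j
      have inner : ∀ v, ((TCM.Bmat ξ)ᵀ * M⁻¹) i v
          = M⁻¹ (ξ i).1 v - M⁻¹ (ξ i).2 v := by
        intro v
        rw [Matrix.mul_apply]
        simp only [Matrix.transpose_apply, TCM.Bmat, Matrix.of_apply, sub_mul]
        rw [Finset.sum_sub_distrib]
        simp [ite_mul, zero_mul, one_mul, Finset.sum_ite_eq]
      rw [Matrix.mul_apply, Finset.sum_congr rfl (fun v _ => by rw [inner v])]
      simp only [TCM.Bmat, Matrix.of_apply, mul_sub, sub_mul]
      rw [Finset.sum_sub_distrib, Finset.sum_sub_distrib, Finset.sum_sub_distrib]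
      simp only [mul_ite, mul_one, mul_zero]
      rw [Finset.sum_ite_eq' Finset.univ (ξ j).1 (fun v => M⁻¹ (ξ i).1 v),
        Finset.sum_ite_eq' Finset.univ (ξ j).2 (fun v => M⁻¹ (ξ i).1 v),
        Finset.sum_ite_eq' Finset.univ (ξ j).1 (fun v => M⁻¹ (ξ i).2 v),
        Finset.sum_ite_eq' Finset.univ (ξ j).2 (fun v => M⁻¹ (ξ i).2 v)]
      simp only [Finset.mem_univ, if_true, transferK]
      ring
    rw [hK]
    have hspow : (-1:ℝ)^k * (-1:ℝ)^k = 1 := by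
      rw [← pow_add, ← two_mul, pow_mul]
      norm_num
    have hfin : ∀ a bq c : ℝ,
        (-1:ℝ)^k * a * (c * ((-1:ℝ)^k * bq)) = c * a * bq := by
      intro a bq c
      calc (-1:ℝ)^k * a * (c * ((-1:ℝ)^k * bq))
          = ((-1:ℝ)^k * (-1:ℝ)^k) * (a * c * bq) := by ring
        _ = c * a * bq := by rw [hspow]; ring
    exact hfin _ _ _
  · intro ε
    set s : Fin k → ℝ := fun i => if ε i then -1 else 1 with hs
    have hmat : (Matrix.of fun i j : Fin k =>
          transferK G (if ε i then ((ξ i).2, (ξ i).1) else ξ i)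
            (if ε j then ((ξ j).2, (ξ j).1) else ξ j))
        = Matrix.diagonal s * (Matrix.of fun i j : Fin k => transferK G (ξ i) (ξ j)) *
            Matrix.diagonal s := by
      ext i j
      rw [Matrix.mul_diagonal, Matrix.diagonal_mul]
      cases hi : ε i <;> cases hj : ε j <;>
        simp [transferK, hs, hi, hj] <;> ring
    rw [hmat, Matrix.det_mul, Matrix.det_mul, Matrix.det_diagonal]
    have hss : (∏ i, s i) * (∏ i, s i) = 1 := by
      rw [← Finset.prod_mul_distrib]
      apply Finset.prod_eq_one
      intro i _
      cases h : ε i <;> simp [hs, h]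
    calc (∏ i, s i) * (Matrix.of fun i j : Fin k => transferK G (ξ i) (ξ j)).det * (∏ i, s i)
        = ((∏ i, s i) * (∏ i, s i)) *
            (Matrix.of fun i j : Fin k => transferK G (ξ i) (ξ j)).det := by ring
      _ = (Matrix.of fun i j : Fin k => transferK G (ξ i) (ξ j)).det := by rw [hss]; ring
end

section
/- Trace of the Dirichlet form on F: with D = F^c, the conductances and killing of the trace process satisfy C^{{F}}_{x,y} = C_{x,y} + Σ_{a,b∈D} C_{x,a} C_{b,y} (G^D)^{a,b} and λ^{{F}}_x = λ_x − Σ_{a,b∈D} C_{x,a} C_{b,x} (G^D)^{a,b} for x ≠ y in F, where e^{{F}}(f) = e(H^F f) and H^F is the harmonic extension operator [H^F]^x_y = 1_{x=y} + 1_D(x) Σ_{b∈D} (G^D)^{x,b} C_{b,y}. -/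
open Matrix Finset

theorem trace_form_conductances {X : Type*} [Fintype X] [DecidableEq X]
    (C : Matrix X X ℝ) (κ lam : X → ℝ)
    (hsymm : ∀ x y, C x y = C y x) (hC : ∀ x y, 0 ≤ C x y)
    (hdiag : ∀ x, C x x = 0) (hκ : ∀ x, 0 ≤ κ x)
    (hlam : ∀ x, lam x = κ x + ∑ y, C x y)
    (hpd : (Matrix.diagonal lam - C).PosDef)
    (F : Finset X) (D : Finset X) (hD : D = Fᶜ)
    -- `GD` is the Green function of the process killed outside `D`,
    -- extended by `0` off `D × D`:
    (GD : Matrix X X ℝ)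
    (hGD0 : ∀ a b, a ∉ D ∨ b ∉ D → GD a b = 0)
    (hGD : ∀ a ∈ D, ∀ b ∈ D,
      ∑ c ∈ D, ((Matrix.diagonal lam - C) a c) * GD c b = (if a = b then 1 else 0))
    -- the harmonic extension operator `H^F`:
    (HF : (X → ℝ) → (X → ℝ))
    (hHF : ∀ f x, HF f x =
      if x ∈ F then f x else ∑ y ∈ F, (∑ b ∈ D, GD x b * C b y) * f y)
    -- the bilinear energy form:
    (e : (X → ℝ) → (X → ℝ) → ℝ)
    (he : ∀ f g, e f g = ∑ u, ∑ v, ((Matrix.diagonal lam - C) u v) * f u * g v) :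
    (∀ x ∈ F, ∀ y ∈ F, x ≠ y →
      -(e (HF (fun z => if z = x then 1 else 0)) (HF (fun z => if z = y then 1 else 0)))
        = C x y + ∑ a ∈ D, ∑ b ∈ D, C x a * C b y * GD a b) ∧
    (∀ x ∈ F,
      e (HF (fun z => if z = x then 1 else 0)) (HF (fun z => if z = x then 1 else 0))
        = lam x - ∑ a ∈ D, ∑ b ∈ D, C x a * C b x * GD a b) := by
  subst hD
  set L : Matrix X X ℝ := Matrix.diagonal lam - C with hLdef
  -- off-diagonal entries of L
  have hLoff : ∀ u v : X, u ≠ v → L u v = -C u v := by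
    intro u v huv
    simp [hLdef, Matrix.sub_apply, Matrix.diagonal_apply_ne _ huv]
  -- value of the harmonic extension of a delta function
  have hφ : ∀ y ∈ F, ∀ v, HF (fun z => if z = y then 1 else 0) v =
      if v ∈ F then (if v = y then 1 else 0) else ∑ b ∈ Fᶜ, GD v b * C b y := by
    intro y hy v
    rw [hHF]
    by_cases hv : v ∈ F
    · simp [hv]
    · simp only [hv, if_false]
      rw [Finset.sum_eq_single y]
      · simp
      · intro b _ hbne; simp [hbne]
      · intro h; exact absurd hy h
  -- the inner sum
  have hS : ∀ y ∈ F, ∀ u, (∑ v, L u v * HF (fun z => if z = y then 1 else 0) v)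
      = L u y + ∑ v ∈ Fᶜ, L u v * (∑ b ∈ Fᶜ, GD v b * C b y) := by
    intro y hy u
    rw [← Finset.sum_add_sum_compl F]
    congr 1
    · rw [Finset.sum_congr rfl (fun v hv => by rw [hφ y hy v, if_pos hv])]
      rw [Finset.sum_eq_single y]
      · simp
      · intro b _ hbne; simp [hbne]
      · intro h; exact absurd hy h
    · refine Finset.sum_congr rfl fun v hv => ?_
      rw [hφ y hy v, if_neg (Finset.mem_compl.mp hv)]
  -- the inner sum vanishes off F
  have hS0 : ∀ y ∈ F, ∀ u ∈ Fᶜ,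
      (∑ v, L u v * HF (fun z => if z = y then 1 else 0) v) = 0 := by
    intro y hy u hu
    rw [hS y hy u]
    have hswap : ∑ v ∈ Fᶜ, L u v * (∑ b ∈ Fᶜ, GD v b * C b y)
        = ∑ b ∈ Fᶜ, (∑ v ∈ Fᶜ, L u v * GD v b) * C b y := by
      simp_rw [Finset.mul_sum, Finset.sum_mul, mul_assoc]
      rw [Finset.sum_comm]
    rw [hswap]
    rw [Finset.sum_congr rfl (fun b hb => by rw [hGD u hu b hb])]
    rw [Finset.sum_eq_single u]
    · have huy : u ≠ y := fun h => (Finset.mem_compl.mp hu) (h ▸ hy)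
      rw [hLoff u y huy]; simp
    · intro b _ hbne; simp [Ne.symm hbne]
    · intro h; exact absurd hu h
  -- the key computation
  have key : ∀ x ∈ F, ∀ y ∈ F,
      e (HF (fun z => if z = x then 1 else 0)) (HF (fun z => if z = y then 1 else 0))
        = L x y - ∑ a ∈ Fᶜ, ∑ b ∈ Fᶜ, C x a * GD a b * C b y := by
    intro x hx y hy
    rw [he]
    have hfac : ∀ u, (∑ v, L u v * HF (fun z => if z = x then 1 else 0) u
          * HF (fun z => if z = y then 1 else 0) v)
        = HF (fun z => if z = x then 1 else 0) u
          * ∑ v, L u v * HF (fun z => if z = y then 1 else 0) v := by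
      intro u
      rw [Finset.mul_sum]
      exact Finset.sum_congr rfl fun v _ => by ring
    rw [Finset.sum_congr rfl fun u _ => hfac u]
    rw [← Finset.sum_add_sum_compl F]
    have h2 : ∑ u ∈ Fᶜ, HF (fun z => if z = x then 1 else 0) u
        * (∑ v, L u v * HF (fun z => if z = y then 1 else 0) v) = 0 := by
      refine Finset.sum_eq_zero fun u hu => ?_
      rw [hS0 y hy u hu, mul_zero]
    rw [h2, add_zero]
    have h1 : ∑ u ∈ F, HF (fun z => if z = x then 1 else 0) u
        * (∑ v, L u v * HF (fun z => if z = y then 1 else 0) v)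
        = ∑ v, L x v * HF (fun z => if z = y then 1 else 0) v := by
      rw [Finset.sum_congr rfl (fun u hu => by rw [hφ x hx u, if_pos hu])]
      rw [Finset.sum_eq_single x]
      · simp
      · intro b _ hbne; simp [hbne]
      · intro h; exact absurd hx h
    rw [h1, hS y hy x]
    congr 1
    rw [← Finset.sum_neg_distrib]
    refine Finset.sum_congr rfl fun v hv => ?_
    have hxv : x ≠ v := fun h => (Finset.mem_compl.mp hv) (h ▸ hx)
    rw [hLoff x v hxv, Finset.mul_sum, ← Finset.sum_neg_distrib]
    exact Finset.sum_congr rfl fun b _ => by ring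
  constructor
  · intro x hx y hy hxy
    rw [key x hx y hy, hLoff x y hxy]
    rw [show (∑ a ∈ Fᶜ, ∑ b ∈ Fᶜ, C x a * GD a b * C b y)
        = ∑ a ∈ Fᶜ, ∑ b ∈ Fᶜ, C x a * C b y * GD a b from
      Finset.sum_congr rfl fun a _ => Finset.sum_congr rfl fun b _ => by ring]
    ring
  · intro x hx
    rw [key x hx x hx]
    have hLxx : L x x = lam x := by
      simp [hLdef, Matrix.sub_apply, Matrix.diagonal_apply_eq, hdiag x]
    rw [hLxx]
    congr 1
    exact Finset.sum_congr rfl fun a _ => Finset.sum_congr rfl fun b _ => by ring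
end
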